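/- arXiv:2207.11414 — 7 statements merged into one kernel-verified Lean document; each statement's English description precedes it below -/
import Mathlib

section
/- Let A be an n×n Metzler matrix. Then A is Hurwitz (all eigenvalues have strictly negative real parts) if and only if there exists a vector x ∈ ℝⁿ with all entries strictly positive such that Ax has all entries strictly negative. -/
open Matrix Polynomial

variable {m : Type*} [Fintype m] [DecidableEq m]

/-- Spectral abscissa: the largest real part among the (complex) eigenvalues. -/
noncomputable def specAbscissa (M : Matrix m m ℝ) : ℝ :=
  sSup {x : ℝ | ∃ μ ∈ M.charpoly.aroots ℂ, x = μ.re}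

/-- Spectral radius: the largest modulus among the (complex) eigenvalues. -/
noncomputable def specRadius (M : Matrix m m ℝ) : ℝ :=
  sSup {x : ℝ | ∃ μ ∈ M.charpoly.aroots ℂ, x = ‖μ‖}

/-- A matrix is Metzler if all off-diagonal entries are nonnegative. -/
def IsMetzler (A : Matrix m m ℝ) : Prop := ∀ i j, i ≠ j → 0 ≤ A i j

/-- A matrix is Hurwitz if all its eigenvalues have strictly negative real part. -/
def IsHurwitz (A : Matrix m m ℝ) : Prop := ∀ μ ∈ A.charpoly.aroots ℂ, μ.re < 0

/-- A matrix is irreducible if its associated digraph is strongly connected. -/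
def IsIrreducibleMat (A : Matrix m m ℝ) : Prop :=
  ∀ i j : m, Relation.ReflTransGen (fun a b => A a b ≠ 0) i j

/-!
If `x > 0` and `A x < 0`, Gershgorin's theorem for the similar matrix `diag(x)⁻¹ A diag(x)` puts
every eigenvalue `μ` in a disc `|μ - aₖₖ| ≤ ∑_{j ≠ k} aₖⱼ xⱼ / xₖ < -aₖₖ`, which lies in the open
left half-plane.

Conversely, for small `t > 0` the matrix `C = 1 + t A` is entrywise nonnegative and its
eigenvalues `1 + t μ` lie in the open unit disc. By Gelfand's formula some power has
`‖Cᵏ‖_∞ < 1`, and then `x = ∑_{m < k} Cᵐ 𝟙 ≥ 𝟙` satisfies `(C - 1) x = Cᵏ 𝟙 - 𝟙 < 0`,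
that is, `t A x < 0`.
-/

open Filter Topology

theorem spectrum.one_add_smul {𝕜 A : Type*} [Field 𝕜] [Ring A] [Algebra 𝕜 A] (a : A) {t : 𝕜}
    (ht : t ≠ 0) : spectrum 𝕜 (1 + t • a) = (fun μ => 1 + t * μ) '' spectrum 𝕜 a := by
  rw [← map_one (algebraMap 𝕜 A), ← spectrum.singleton_add_eq,
    show t • a = (Units.mk0 t ht) • a from rfl, spectrum.unit_smul_eq_smul, Set.singleton_add,
    ← Set.image_smul, Set.image_image]
  rfl

theorem exists_norm_pow_lt_one_of_forall_mem_spectrum {A : Type*} [NormedRing A]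
    [NormedAlgebra ℂ A] [CompleteSpace A] (a : A) (h : ∀ z ∈ spectrum ℂ a, ‖z‖ < 1) :
    ∃ k : ℕ, ‖a ^ k‖ < 1 := by
  cases subsingleton_or_nontrivial A with
  | inl _ => exact ⟨1, by simp [Subsingleton.elim a 0]⟩
  | inr _ =>
    have hρ : spectralRadius ℂ a < (1 : NNReal) :=
      spectrum.spectralRadius_lt_of_forall_lt a fun z hz => by exact_mod_cast h z hz
    obtain ⟨k, hk, hk0⟩ := ((spectrum.pow_nnnorm_pow_one_div_tendsto_nhds_spectralRadius a
      |>.eventually_lt_const hρ).and (eventually_gt_atTop 0)).exists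
    rw [one_div, ENNReal.rpow_inv_lt_iff (by positivity)] at hk
    exact ⟨k, mod_cast (by simpa using hk : ‖a ^ k‖₊ < 1)⟩

theorem Complex.eventually_norm_one_add_mul_lt_one {μ : ℂ} (hμ : μ.re < 0) :
    ∀ᶠ t : ℝ in 𝓝[>] 0, ‖1 + t * μ‖ < 1 := by
  have hlim : Tendsto (fun t : ℝ => t * ‖μ‖ ^ 2 + 2 * μ.re) (𝓝 0) (𝓝 (2 * μ.re)) := by
    simpa using ((tendsto_id (x := 𝓝 (0 : ℝ))).mul_const (‖μ‖ ^ 2)).add_const (2 * μ.re)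
  filter_upwards [self_mem_nhdsWithin,
    nhdsWithin_le_nhds (hlim.eventually_lt_const (by linarith))] with t (ht : 0 < t) hneg
  have hsq : ‖1 + t * μ‖ ^ 2 = 1 + t * (t * ‖μ‖ ^ 2 + 2 * μ.re) := by
    simp only [Complex.sq_norm, normSq_apply, add_re, one_re, mul_re, ofReal_re, ofReal_im, add_im,
      one_im, mul_im, zero_mul, sub_zero, add_zero, zero_add]
    ring
  rw [← sq_lt_one_iff₀ (norm_nonneg _), hsq]
  nlinarith

section Linfty

variable {ι : Type*} [Fintype ι]

attribute [local instance] Matrix.linftyOpNormedAddCommGroup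

theorem Matrix.linfty_opNorm_map_ofReal (M : Matrix ι ι ℝ) :
    ‖M.map (algebraMap ℝ ℂ)‖ = ‖M‖ := by
  simp [linfty_opNorm_def, Complex.nnnorm_real]

theorem Matrix.mulVec_one_apply_le_linfty_opNorm (M : Matrix ι ι ℝ) (i : ι) :
    (M *ᵥ 1) i ≤ ‖M‖ :=
  calc (M *ᵥ 1) i ≤ ‖M *ᵥ 1‖ := (le_abs_self _).trans (norm_le_pi_norm (M *ᵥ 1) i)
    _ ≤ ‖M‖ * ‖(1 : ι → ℝ)‖ := linfty_opNorm_mulVec M 1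
    _ ≤ ‖M‖ :=
      mul_le_of_le_one_right (norm_nonneg _) ((pi_norm_const_le (1 : ℝ)).trans_eq norm_one)

end Linfty

section

variable {ι : Type*} [Fintype ι] [DecidableEq ι]

theorem Matrix.mem_aroots_charpoly_iff_mem_spectrum_map {K L : Type*} [Field K] [Field L]
    [Algebra K L] (A : Matrix ι ι K) (μ : L) :
    μ ∈ A.charpoly.aroots L ↔ μ ∈ spectrum L (A.map (algebraMap K L)) := by
  rw [mem_spectrum_iff_isRoot_charpoly, charpoly_map, mem_aroots', IsRoot.def,
    eval_map_algebraMap, and_iff_right (A.charpoly_monic.map _).ne_zero]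

theorem Matrix.exists_norm_sub_diag_le_of_mem_spectrum {K : Type*} [NormedField K]
    (A : Matrix ι ι K) {x : ι → K} (hx : ∀ i, x i ≠ 0) {μ : K} (hμ : μ ∈ spectrum K A) :
    ∃ k, ‖μ - A k k‖ ≤ ∑ j ∈ Finset.univ.erase k, ‖A k j * x j / x k‖ := by
  let D : (Matrix ι ι K)ˣ :=
    ⟨diagonal x, diagonal x⁻¹, by simp [diagonal_mul_diagonal, hx],
      by simp [diagonal_mul_diagonal, hx]⟩
  have hμ' : Module.End.HasEigenvalue (toLin' (D⁻¹.val * A * D.val)) μ := by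
    rwa [Module.End.hasEigenvalue_iff_mem_spectrum, spectrum_toLin', spectrum.units_conjugate']
  have hD : ∀ k j, (D⁻¹.val * A * D.val) k j = A k j * x j / x k := fun k j => by
    simp [D, diagonal_mul, mul_diagonal, div_eq_inv_mul, mul_assoc]
  obtain ⟨k, hk⟩ := eigenvalue_mem_ball hμ'
  rw [mem_closedBall_iff_norm, hD, mul_div_cancel_right₀ _ (hx k)] at hk
  exact ⟨k, by simpa only [hD] using hk⟩

theorem Matrix.exists_pos_sub_one_mulVec_neg {C : Matrix ι ι ℝ} (hC : ∀ i j, 0 ≤ C i j) {k : ℕ}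
    (hk : ∀ i, (C ^ k *ᵥ 1) i < 1) :
    ∃ x : ι → ℝ, (∀ i, 0 < x i) ∧ ∀ i, ((C - 1) *ᵥ x) i < 0 := by
  refine ⟨(∑ m ∈ Finset.range k, C ^ m) *ᵥ 1, fun i => ?_, fun i => ?_⟩
  · have hk0 : 0 < k := Nat.pos_of_ne_zero fun h => by simpa [h] using hk i
    rw [sum_mulVec, Finset.sum_apply]
    calc (0 : ℝ) < (C ^ 0 *ᵥ 1) i := by simp
      _ ≤ ∑ m ∈ Finset.range k, (C ^ m *ᵥ 1) i :=
        Finset.single_le_sum (f := fun m => (C ^ m *ᵥ 1) i) (fun m _ => Finset.sum_nonneg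
          fun j _ => by simpa using pow_apply_nonneg hC m i j) (Finset.mem_range.2 hk0)
  · rw [mulVec_mulVec, mul_geom_sum, sub_mulVec, one_mulVec]
    simpa using hk i

theorem IsMetzler.eventually_one_add_smul_nonneg {A : Matrix ι ι ℝ} (hA : IsMetzler A) :
    ∀ᶠ t : ℝ in 𝓝[>] 0, ∀ i j, 0 ≤ (1 + t • A) i j := by
  have hdiag : ∀ᶠ t : ℝ in 𝓝 0, ∀ i, 0 < 1 + t * A i i := eventually_all.2 fun i =>
    (((tendsto_id (x := 𝓝 (0 : ℝ))).mul_const (A i i)).const_add 1).eventually_const_lt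
      (by simp)
  filter_upwards [self_mem_nhdsWithin, nhdsWithin_le_nhds hdiag] with t (ht : 0 < t) hd i j
  by_cases h : i = j
  · subst h; simpa using (hd i).le
  · simpa [one_apply_ne h] using mul_nonneg ht.le (hA i j h)

theorem IsMetzler.isHurwitz_of_pos_mulVec_neg {A : Matrix ι ι ℝ} (hA : IsMetzler A)
    {x : ι → ℝ} (hx : ∀ i, 0 < x i) (hAx : ∀ i, (A *ᵥ x) i < 0) : IsHurwitz A := by
  intro μ hμ
  rw [mem_aroots_charpoly_iff_mem_spectrum_map] at hμ
  obtain ⟨k, hk⟩ := (A.map (algebraMap ℝ ℂ)).exists_norm_sub_diag_le_of_mem_spectrum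
    (x := fun i => (x i : ℂ)) (fun i => Complex.ofReal_ne_zero.2 (hx i).ne') hμ
  have hoff : ∑ j ∈ Finset.univ.erase k, ‖(A k j : ℂ) * x j / x k‖
      = (∑ j ∈ Finset.univ.erase k, A k j * x j) / x k := by
    rw [Finset.sum_div]
    refine Finset.sum_congr rfl fun j hj => ?_
    rw [← Complex.ofReal_mul, ← Complex.ofReal_div, Complex.norm_real, Real.norm_eq_abs,
      abs_of_nonneg (div_nonneg (mul_nonneg (hA k j (Finset.ne_of_mem_erase hj).symm)
        (hx j).le) (hx k).le)]
  have hrow : ∑ j ∈ Finset.univ.erase k, A k j * x j < -A k k * x k := by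
    have := hAx k
    rw [mulVec, dotProduct, ← Finset.add_sum_erase _ _ (Finset.mem_univ k)] at this
    linarith
  calc μ.re = (μ - A k k).re + A k k := by simp
    _ ≤ ‖μ - A k k‖ + A k k := by gcongr; exact Complex.re_le_norm _
    _ ≤ (∑ j ∈ Finset.univ.erase k, A k j * x j) / x k + A k k := by
        gcongr
        simpa only [map_apply, Complex.coe_algebraMap, hoff] using hk
    _ < -A k k * x k / x k + A k k := by gcongr; exact hx k
    _ = 0 := by rw [mul_div_cancel_right₀ _ (hx k).ne']; ring

attribute [local instance] Matrix.linftyOpNormedRing Matrix.linftyOpNormedAlgebra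

theorem IsMetzler.exists_pos_mulVec_neg_of_isHurwitz {A : Matrix ι ι ℝ} (hA : IsMetzler A)
    (hH : IsHurwitz A) : ∃ x : ι → ℝ, (∀ i, 0 < x i) ∧ ∀ i, (A *ᵥ x) i < 0 := by
  obtain ⟨t, ht, hC, hσ⟩ : ∃ t : ℝ, 0 < t ∧ (∀ i j, 0 ≤ (1 + t • A) i j) ∧
      ∀ μ ∈ (A.charpoly.aroots ℂ).toFinset, ‖1 + t * μ‖ < 1 :=
    (eventually_mem_nhdsWithin.and (hA.eventually_one_add_smul_nonneg.and
      ((eventually_all_finset _).2 fun μ hμ =>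
        Complex.eventually_norm_one_add_mul_lt_one (hH μ (Multiset.mem_toFinset.1 hμ))))).exists
  have : CompleteSpace (Matrix ι ι ℂ) := FiniteDimensional.complete ℂ _
  have hCℂ : (1 + t • A).map (algebraMap ℝ ℂ) = 1 + (t : ℂ) • A.map (algebraMap ℝ ℂ) := by
    ext i j; by_cases h : i = j <;> simp [one_apply, h]
  have hσC : ∀ z ∈ spectrum ℂ ((1 + t • A).map (algebraMap ℝ ℂ)), ‖z‖ < 1 := by
    rw [hCℂ, spectrum.one_add_smul _ (Complex.ofReal_ne_zero.2 ht.ne')]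
    rintro _ ⟨μ, hμ, rfl⟩
    exact hσ μ (Multiset.mem_toFinset.2 ((mem_aroots_charpoly_iff_mem_spectrum_map A μ).2 hμ))
  obtain ⟨k, hk⟩ := exists_norm_pow_lt_one_of_forall_mem_spectrum _ hσC
  rw [← Matrix.map_pow, linfty_opNorm_map_ofReal] at hk
  obtain ⟨x, hx, hCx⟩ := exists_pos_sub_one_mulVec_neg hC fun i =>
    (mulVec_one_apply_le_linfty_opNorm _ i).trans_lt hk
  refine ⟨x, hx, fun i => ?_⟩
  have htAx := hCx i
  rw [add_sub_cancel_left, smul_mulVec, Pi.smul_apply, smul_eq_mul] at htAx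
  exact neg_of_mul_neg_right htAx ht.le

end

/-- A Metzler matrix is Hurwitz iff there is a strictly positive vector x with Ax ≪ 0. -/
theorem metzler_hurwitz_iff_exists_pos_vec_mulVec_neg
    {n : ℕ} (A : Matrix (Fin n) (Fin n) ℝ) (hA : IsMetzler A) :
    IsHurwitz A ↔ ∃ x : Fin n → ℝ, (∀ i, 0 < x i) ∧ ∀ i, A.mulVec x i < 0 :=
  ⟨hA.exists_pos_mulVec_neg_of_isHurwitz, fun ⟨_, hx, hAx⟩ => hA.isHurwitz_of_pos_mulVec_neg hx hAx⟩
end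

section
/- Let A be an n×n Metzler matrix partitioned in blocks A = [[A11, A12],[A21, A22]] with A11 and A22 square. Suppose A11 is invertible and define the Schur complement A/A11 := A22 - A21 A11⁻¹ A12. Then A is Hurwitz if and only if A11 and A/A11 are both Hurwitz Metzler matrices. -/
open Matrix Polynomial

variable {m : Type*} [Fintype m] [DecidableEq m]

namespace MetzlerSchurAux

open Filter Topology

attribute [local instance] Matrix.linftyOpNormedRing Matrix.linftyOpNormedAlgebra

section NormPart

variable {m : Type*} [Fintype m] [DecidableEq m]

lemma eval_charpoly' {R : Type*} [CommRing R] (M : Matrix m m R) (s : R) :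
    M.charpoly.eval s = (s • (1 : Matrix m m R) - M).det := by
  rw [Matrix.charpoly, ← Polynomial.coe_evalRingHom, RingHom.map_det]
  congr 1
  ext i j
  by_cases h : i = j <;>
    simp [h, Matrix.charmatrix_apply, Matrix.one_apply, Matrix.smul_apply, Matrix.sub_apply]

lemma entry_abs_le_norm (M : Matrix m m ℝ) (i j : m) : |M i j| ≤ ‖M‖ := by
  rw [Matrix.linfty_opNorm_def]
  have h1 : ‖M i j‖₊ ≤ ∑ j', ‖M i j'‖₊ :=
    Finset.single_le_sum (f := fun j' => ‖M i j'‖₊) (by simp) (Finset.mem_univ j)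
  have h2 : (∑ j', ‖M i j'‖₊) ≤ (Finset.univ : Finset m).sup fun i => ∑ j', ‖M i j'‖₊ :=
    Finset.le_sup (f := fun i => ∑ j', ‖M i j'‖₊) (Finset.mem_univ i)
  calc |M i j| = (‖M i j‖₊ : ℝ) := by simp [Real.norm_eq_abs]
  _ ≤ _ := by exact_mod_cast h1.trans h2

/-- the entry map as a continuous linear map -/
noncomputable def entryCLM (i j : m) : Matrix m m ℝ →L[ℝ] ℝ :=
  LinearMap.mkContinuous
    { toFun := fun M => M i j
      map_add' := fun _ _ => rfl
      map_smul' := fun _ _ => rfl } 1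
    (fun M => by rw [one_mul]; exact entry_abs_le_norm M i j)

lemma entry_tsum (x : ℕ → Matrix m m ℝ) (hx : Summable x) (i j : m) :
    (∑' n, x n) i j = ∑' n, x n i j := by
  have := ((entryCLM i j).hasSum hx.hasSum)
  exact this.tsum_eq.symm

lemma pow_entry_nonneg {x : Matrix m m ℝ} (hx : ∀ i j, 0 ≤ x i j) (n : ℕ) :
    ∀ i j, 0 ≤ (x ^ n) i j := by
  induction n with
  | zero => intro i j; by_cases h : i = j <;> simp [pow_zero, Matrix.one_apply, h]
  | succ n ih =>
      intro i j
      rw [pow_succ, Matrix.mul_apply]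
      exact Finset.sum_nonneg fun k _ => mul_nonneg (ih i k) (hx k j)

lemma mul_entry_nonneg {l n p : Type*} [Fintype n] {A : Matrix l n ℝ} {B : Matrix n p ℝ}
    (hA : ∀ i j, 0 ≤ A i j) (hB : ∀ i j, 0 ≤ B i j) : ∀ i j, 0 ≤ (A * B) i j := fun i j => by
  rw [Matrix.mul_apply]; exact Finset.sum_nonneg fun k _ => mul_nonneg (hA i k) (hB k j)

lemma inv_one_sub_nonneg {x : Matrix m m ℝ} (hx : ∀ i j, 0 ≤ x i j) (h : ‖x‖ < 1) :
    IsUnit (1 - x) ∧ ∀ i j, 0 ≤ ((1 - x)⁻¹ : Matrix m m ℝ) i j := by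
  have hsum : Summable fun n : ℕ => x ^ n := summable_geometric_of_norm_lt_one h
  have hinv : ((1 - x)⁻¹ : Matrix m m ℝ) = ∑' n : ℕ, x ^ n :=
    Matrix.inv_eq_left_inv (geom_series_mul_neg x h)
  refine ⟨(Units.oneSub x h).isUnit, fun i j => ?_⟩
  rw [hinv, entry_tsum _ hsum]
  exact tsum_nonneg fun n => pow_entry_nonneg hx n i j

/-- L1: large s case -/
lemma res_nonneg_of_large {M : Matrix m m ℝ} (hM : IsMetzler M) {c s : ℝ}
    (hc : ∀ i, 0 ≤ M i i + c) (hs : ‖M + c • (1 : Matrix m m ℝ)‖ < s + c) :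
    IsUnit (s • (1 : Matrix m m ℝ) - M) ∧
      ∀ i j, 0 ≤ ((s • (1 : Matrix m m ℝ) - M)⁻¹) i j := by
  set N : Matrix m m ℝ := M + c • 1 with hN
  have hNnn : ∀ i j, 0 ≤ N i j := by
    intro i j
    by_cases h : i = j
    · subst h; simpa [hN, Matrix.add_apply, Matrix.smul_apply, Matrix.one_apply] using hc i
    · simpa [hN, Matrix.add_apply, Matrix.smul_apply, Matrix.one_apply_ne h] using hM i j h
  have hscpos : 0 < s + c := lt_of_le_of_lt (norm_nonneg N) hs
  set x : Matrix m m ℝ := (s + c)⁻¹ • N with hx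
  have hxnn : ∀ i j, 0 ≤ x i j := fun i j => by
    simpa [hx, Matrix.smul_apply] using mul_nonneg (inv_nonneg.mpr hscpos.le) (hNnn i j)
  have hxnorm : ‖x‖ < 1 := by
    rw [hx, norm_smul]
    rw [Real.norm_eq_abs, abs_of_nonneg (inv_nonneg.mpr hscpos.le)]
    rw [inv_mul_lt_iff₀ hscpos, mul_one]
    exact hs
  obtain ⟨hu, hnn⟩ := inv_one_sub_nonneg hxnn hxnorm
  have key : s • (1 : Matrix m m ℝ) - M = (s + c) • (1 - x) := by
    rw [hx, smul_sub, smul_smul, mul_inv_cancel₀ hscpos.ne', one_smul, hN]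
    module
  have hunit : IsUnit (s • (1 : Matrix m m ℝ) - M) := by
    rw [key]
    have h1 : IsUnit ((s + c) • (1 : Matrix m m ℝ)) := by
      refine (Matrix.isUnit_iff_isUnit_det _).mpr ?_
      simp [Matrix.det_smul, isUnit_iff_ne_zero, hscpos.ne']
    have h2 : (s + c) • (1 - x) = ((s + c) • (1 : Matrix m m ℝ)) * (1 - x) := by
      rw [Matrix.smul_mul, one_mul]
    rw [h2]; exact h1.mul hu
  have hinv : (s • (1 : Matrix m m ℝ) - M)⁻¹ = (s + c)⁻¹ • (1 - x)⁻¹ := by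
    apply Matrix.inv_eq_left_inv
    rw [key, Matrix.smul_mul, Matrix.mul_smul, smul_smul, inv_mul_cancel₀ hscpos.ne', one_smul,
      Matrix.nonsing_inv_mul _ ((Matrix.isUnit_iff_isUnit_det _).mp hu)]
  refine ⟨hunit, fun i j => ?_⟩
  rw [hinv]
  simpa [Matrix.smul_apply] using mul_nonneg (inv_nonneg.mpr hscpos.le) (hnn i j)

/-- L2: Neumann step downward -/
lemma res_nonneg_step {M : Matrix m m ℝ} {s₁ ε : ℝ}
    (hu : IsUnit (s₁ • (1 : Matrix m m ℝ) - M))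
    (hnn : ∀ i j, 0 ≤ ((s₁ • (1 : Matrix m m ℝ) - M)⁻¹) i j)
    (hε : 0 ≤ ε) (hsmall : ε * ‖(s₁ • (1 : Matrix m m ℝ) - M)⁻¹‖ < 1) :
    IsUnit ((s₁ - ε) • (1 : Matrix m m ℝ) - M) ∧
      ∀ i j, 0 ≤ (((s₁ - ε) • (1 : Matrix m m ℝ) - M)⁻¹) i j := by
  set R : Matrix m m ℝ := (s₁ • (1 : Matrix m m ℝ) - M)⁻¹ with hR
  have hdet : IsUnit (s₁ • (1 : Matrix m m ℝ) - M).det := (Matrix.isUnit_iff_isUnit_det _).mp hu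
  set x : Matrix m m ℝ := ε • R with hx
  have hxnn : ∀ i j, 0 ≤ x i j := fun i j => by
    simpa [hx, Matrix.smul_apply] using mul_nonneg hε (hnn i j)
  have hxnorm : ‖x‖ < 1 := by
    rw [hx, norm_smul, Real.norm_eq_abs, abs_of_nonneg hε]; exact hsmall
  obtain ⟨hu2, hnn2⟩ := inv_one_sub_nonneg hxnn hxnorm
  have key : (s₁ - ε) • (1 : Matrix m m ℝ) - M = (s₁ • (1 : Matrix m m ℝ) - M) * (1 - x) := by
    rw [hx, Matrix.mul_sub, Matrix.mul_smul, Matrix.mul_nonsing_inv _ hdet, mul_one, sub_smul]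
    module
  have hunit : IsUnit ((s₁ - ε) • (1 : Matrix m m ℝ) - M) := by rw [key]; exact hu.mul hu2
  have hinv : ((s₁ - ε) • (1 : Matrix m m ℝ) - M)⁻¹ = (1 - x)⁻¹ * R := by
    apply Matrix.inv_eq_left_inv
    rw [key, Matrix.mul_assoc, ← Matrix.mul_assoc R, Matrix.nonsing_inv_mul _ hdet, one_mul,
      Matrix.nonsing_inv_mul _ ((Matrix.isUnit_iff_isUnit_det _).mp hu2)]
  refine ⟨hunit, fun i j => ?_⟩
  rw [hinv]
  exact mul_entry_nonneg hnn2 hnn i j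

/-- continuity of the resolvent at a point where it is invertible -/
lemma res_continuousAt {M : Matrix m m ℝ} {s₁ : ℝ}
    (hu : IsUnit (s₁ • (1 : Matrix m m ℝ) - M)) :
    ContinuousAt (fun s : ℝ => (s • (1 : Matrix m m ℝ) - M)⁻¹) s₁ := by
  have heq : (fun s : ℝ => (s • (1 : Matrix m m ℝ) - M)⁻¹) =
      Ring.inverse ∘ (fun s : ℝ => s • (1 : Matrix m m ℝ) - M) := by
    funext s; simp [Matrix.nonsing_inv_eq_ringInverse]
  rw [heq]
  have h1 : ContinuousAt (fun s : ℝ => s • (1 : Matrix m m ℝ) - M) s₁ :=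
    ((continuous_id.smul continuous_const).sub continuous_const).continuousAt
  obtain ⟨u, hu'⟩ := hu
  have h2 : ContinuousAt Ring.inverse (s₁ • (1 : Matrix m m ℝ) - M) := by
    rw [← hu']
    exact NormedRing.inverse_continuousAt u
  exact ContinuousAt.comp (g := Ring.inverse) h2 h1

/-- Main resolvent nonnegativity lemma -/
lemma resolvent_nonneg {M : Matrix m m ℝ} (hM : IsMetzler M) {a : ℝ}
    (hdet : ∀ s, a ≤ s → IsUnit (s • (1 : Matrix m m ℝ) - M)) :
    ∀ s, a ≤ s → ∀ i j, 0 ≤ ((s • (1 : Matrix m m ℝ) - M)⁻¹) i j := by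
  classical
  set c : ℝ := ∑ i, |M i i| with hc
  have hcM : ∀ i, 0 ≤ M i i + c := by
    intro i
    have h1 : -M i i ≤ |M i i| := neg_le_abs _
    have h2 : |M i i| ≤ c := Finset.single_le_sum (f := fun i => |M i i|)
      (fun i _ => abs_nonneg _) (Finset.mem_univ i)
    linarith
  set N : Matrix m m ℝ := M + c • 1 with hN
  set b : ℝ := max a (‖N‖ + 1 - c) with hb
  have hbase : ∀ s, b ≤ s → IsUnit (s • (1 : Matrix m m ℝ) - M) ∧
      ∀ i j, 0 ≤ ((s • (1 : Matrix m m ℝ) - M)⁻¹) i j := by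
    intro s hs
    refine res_nonneg_of_large hM hcM ?_
    have : ‖N‖ + 1 - c ≤ s := le_trans (le_max_right _ _) hs
    rw [← hN]; linarith
  set T : Set ℝ := {s | a ≤ s ∧ ∀ s', s ≤ s' → ∀ i j,
      0 ≤ ((s' • (1 : Matrix m m ℝ) - M)⁻¹) i j} with hT
  have hbT : b ∈ T := ⟨le_max_left _ _, fun s' hs' i j => (hbase s' hs').2 i j⟩
  have hTne : T.Nonempty := ⟨b, hbT⟩
  have hTbdd : BddBelow T := ⟨a, fun s hs => hs.1⟩
  set s₁ : ℝ := sInf T with hs₁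
  have has₁ : a ≤ s₁ := le_csInf hTne fun s hs => hs.1
  have claimA : ∀ s, s₁ < s → ∀ i j, 0 ≤ ((s • (1 : Matrix m m ℝ) - M)⁻¹) i j := by
    intro s hs i j
    obtain ⟨u, huT, hus⟩ := exists_lt_of_csInf_lt hTne hs
    exact huT.2 s hus.le i j
  have claimB : ∀ i j, 0 ≤ ((s₁ • (1 : Matrix m m ℝ) - M)⁻¹) i j := by
    intro i j
    have hcont : ContinuousAt (fun s : ℝ => (s • (1 : Matrix m m ℝ) - M)⁻¹) s₁ :=
      res_continuousAt (hdet s₁ has₁)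
    have hcont2 : ContinuousAt (fun s : ℝ => ((s • (1 : Matrix m m ℝ) - M)⁻¹) i j) s₁ := by
      have hc2 : Continuous (fun A : Matrix m m ℝ => A i j) :=
        ((continuous_apply j).comp (continuous_apply i))
      exact hc2.continuousAt.comp hcont
    refine ge_of_tendsto (f := fun s : ℝ => ((s • (1 : Matrix m m ℝ) - M)⁻¹) i j)
        (x := 𝓝[>] s₁) (hcont2.tendsto.mono_left nhdsWithin_le_nhds) ?_
    · filter_upwards [self_mem_nhdsWithin] with s (hs : s₁ < s)
      exact claimA s hs i j
  have claimC : s₁ ≤ a := by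
    by_contra hlt
    push_neg at hlt
    set R : Matrix m m ℝ := (s₁ • (1 : Matrix m m ℝ) - M)⁻¹ with hR
    set ε : ℝ := min ((s₁ - a) / 2) ((2 * (‖R‖ + 1))⁻¹) with hε
    have hRnorm : (0:ℝ) < ‖R‖ + 1 := by positivity
    have hεpos : 0 < ε := by
      apply lt_min
      · linarith
      · positivity
    have hεa : a ≤ s₁ - ε := by
      have := min_le_left ((s₁ - a) / 2) ((2 * (‖R‖ + 1))⁻¹)
      rw [← hε] at this; linarith
    have hsmall : ∀ ε', 0 ≤ ε' → ε' ≤ ε → ε' * ‖R‖ < 1 := by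
      intro ε' h0 hle
      have h1 : ε' ≤ (2 * (‖R‖ + 1))⁻¹ := le_trans hle (min_le_right _ _)
      have h2 : ε' * ‖R‖ ≤ (2 * (‖R‖ + 1))⁻¹ * ‖R‖ :=
        mul_le_mul_of_nonneg_right h1 (norm_nonneg _)
      have h3 : (2 * (‖R‖ + 1))⁻¹ * ‖R‖ < 1 := by
        rw [inv_mul_lt_iff₀ (by positivity)]
        nlinarith [norm_nonneg R]
      linarith
    have hmem : s₁ - ε ∈ T := by
      refine ⟨hεa, fun s' hs' i j => ?_⟩
      rcases lt_or_ge s₁ s' with h | h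
      · exact claimA s' h i j
      · have hε' : s' = s₁ - (s₁ - s') := by ring
        have h0 : 0 ≤ s₁ - s' := by linarith
        have hle : s₁ - s' ≤ ε := by linarith
        have := res_nonneg_step (hdet s₁ has₁) claimB h0 (hsmall _ h0 hle)
        rw [hε']
        exact this.2 i j
    have : s₁ ≤ s₁ - ε := csInf_le hTbdd hmem
    linarith
  intro s hs i j
  rcases eq_or_lt_of_le (le_trans claimC hs : s₁ ≤ s) with h | h
  · rw [← h]; exact claimB i j
  · exact claimA s h i j

end NormPart

section SpectralPart

variable {m : Type*} [Fintype m] [DecidableEq m]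

/-- Hurwitz implies no real eigenvalue `≥ 0`, stated as invertibility. -/
lemma unit_of_hurwitz {M : Matrix m m ℝ} (hH : IsHurwitz M) :
    ∀ s : ℝ, 0 ≤ s → IsUnit (s • (1 : Matrix m m ℝ) - M) := by
  intro s hs
  rw [Matrix.isUnit_iff_isUnit_det, isUnit_iff_ne_zero]
  intro h0
  have heval : M.charpoly.eval s = 0 := by rw [eval_charpoly']; exact h0
  have hmem : (s : ℂ) ∈ M.charpoly.aroots ℂ := by
    rw [Polynomial.mem_aroots]
    refine ⟨(Matrix.charpoly_monic M).ne_zero, ?_⟩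
    rw [show ((s : ℂ)) = algebraMap ℝ ℂ s from rfl, Polynomial.aeval_algebraMap_apply]
    simp only [Polynomial.aeval_def]
    rw [show Polynomial.eval₂ (algebraMap ℝ ℝ) s M.charpoly = M.charpoly.eval s by
      rw [Algebra.algebraMap_self]; rfl, heval]
    simp
  have := hH _ hmem
  simp only [Complex.ofReal_re] at this
  linarith

/-- Gershgorin-type argument: Metzler + positive vector with negative image ⇒ Hurwitz. -/
lemma hurwitz_of_pos_vec {M : Matrix m m ℝ} (hM : IsMetzler M) (x : m → ℝ)
    (hx : ∀ i, 0 < x i) (hMx : ∀ i, (M *ᵥ x) i < 0) : IsHurwitz M := by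
  intro μ hμ
  set M' : Matrix m m ℂ := M.map (algebraMap ℝ ℂ) with hM'
  have hdet : (μ • (1 : Matrix m m ℂ) - M').det = 0 := by
    rw [← eval_charpoly']
    rw [Matrix.charpoly_map]
    rw [Polynomial.aroots, Polynomial.mem_roots ((Matrix.charpoly_monic M).map _).ne_zero] at hμ
    exact hμ
  obtain ⟨v, hv0, hv⟩ := Matrix.exists_mulVec_eq_zero_iff.mpr hdet
  have heig : ∀ i, μ * v i = ∑ j, (M i j : ℂ) * v j := by
    intro i
    have h0 := congrFun hv i
    simp only [Matrix.sub_mulVec, Matrix.smul_mulVec, Matrix.one_mulVec, Pi.sub_apply,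
      Pi.smul_apply, smul_eq_mul, Pi.zero_apply, sub_eq_zero] at h0
    rw [h0, Matrix.mulVec, dotProduct]
    simp [hM', Matrix.map_apply]
  obtain ⟨j₀, hj₀⟩ := Function.ne_iff.mp hv0
  have hne : (Finset.univ : Finset m).Nonempty := ⟨j₀, Finset.mem_univ _⟩
  obtain ⟨i, -, hi⟩ := Finset.exists_max_image Finset.univ (fun j => ‖v j‖ / x j) hne
  set c : ℝ := ‖v i‖ / x i with hc
  have hcpos : 0 < c := by
    have h1 : 0 < ‖v j₀‖ / x j₀ := div_pos (by simpa using hj₀) (hx j₀)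
    exact lt_of_lt_of_le h1 (hi j₀ (Finset.mem_univ _))
  have hall : ∀ j, ‖v j‖ ≤ c * x j := by
    intro j
    have := hi j (Finset.mem_univ _)
    rw [div_le_iff₀ (hx j)] at this
    rw [hc]
    calc ‖v j‖ ≤ (‖v i‖ / x i) * x j := this
    _ = _ := rfl
  have hvi : ‖v i‖ = c * x i := (div_mul_cancel₀ _ (hx i).ne').symm
  have hrow : (μ - (M i i : ℂ)) * v i = ∑ j ∈ Finset.univ.erase i, (M i j : ℂ) * v j := by
    have := heig i
    rw [sub_mul, this, ← Finset.add_sum_erase _ _ (Finset.mem_univ i)]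
    ring
  have habs : ‖μ - (M i i : ℂ)‖ * (c * x i) ≤
      ∑ j ∈ Finset.univ.erase i, M i j * (c * x j) := by
    rw [← hvi, ← norm_mul, hrow]
    refine le_trans (norm_sum_le _ _) (Finset.sum_le_sum fun j hj => ?_)
    rw [norm_mul, Complex.norm_real, Real.norm_eq_abs,
      abs_of_nonneg (hM i j (Finset.ne_of_mem_erase hj).symm)]
    exact mul_le_mul_of_nonneg_left (hall j) (hM i j (Finset.ne_of_mem_erase hj).symm)
  have hsum : ∑ j ∈ Finset.univ.erase i, M i j * x j = (M *ᵥ x) i - M i i * x i := by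
    rw [Matrix.mulVec, dotProduct, ← Finset.add_sum_erase _ _ (Finset.mem_univ i)]
    ring
  have hstrict : ∑ j ∈ Finset.univ.erase i, M i j * (c * x j) < c * (-(M i i) * x i) := by
    have heq2 : ∑ j ∈ Finset.univ.erase i, M i j * (c * x j)
        = c * ((M *ᵥ x) i - M i i * x i) := by
      rw [← hsum, Finset.mul_sum]
      congr 1; funext j; ring
    rw [heq2]
    have := hMx i
    have hx2 : (M *ᵥ x) i - M i i * x i < -(M i i) * x i := by linarith
    nlinarith
  have hxi : 0 < c * x i := mul_pos hcpos (hx i)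
  have hfinal : ‖μ - (M i i : ℂ)‖ < -(M i i) := by
    have h2 : ‖μ - (M i i : ℂ)‖ * (c * x i) < c * (-(M i i) * x i) :=
      lt_of_le_of_lt habs hstrict
    have h3 : c * (-(M i i) * x i) = -(M i i) * (c * x i) := by ring
    rw [h3] at h2
    exact lt_of_mul_lt_mul_right (by linarith) hxi.le
  have hre : μ.re - M i i ≤ ‖μ - (M i i : ℂ)‖ := by
    calc μ.re - M i i = (μ - (M i i : ℂ)).re := by simp
    _ ≤ ‖μ - (M i i : ℂ)‖ := Complex.re_le_norm _
  linarith

omit [Fintype m] in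
lemma zero_smul_one_sub (M : Matrix m m ℝ) : (0:ℝ) • (1 : Matrix m m ℝ) - M = -M := by
  rw [zero_smul, zero_sub]

/-- For a Hurwitz Metzler matrix, `M` is invertible and `-M⁻¹` is nonnegative. -/
lemma neg_inv_nonneg {M : Matrix m m ℝ} (hM : IsMetzler M) (hH : IsHurwitz M) :
    IsUnit M.det ∧ ∀ i j, 0 ≤ (-(M⁻¹)) i j := by
  have h0 : IsUnit ((0:ℝ) • (1 : Matrix m m ℝ) - M) := unit_of_hurwitz hH 0 le_rfl
  rw [zero_smul_one_sub] at h0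
  have hdetneg : IsUnit (-M).det := (Matrix.isUnit_iff_isUnit_det _).mp h0
  have hdet : IsUnit M.det := by
    rw [Matrix.det_neg, isUnit_iff_ne_zero] at hdetneg
    rw [isUnit_iff_ne_zero]
    intro h; apply hdetneg; rw [h, mul_zero]
  have hinv : (-M)⁻¹ = -(M⁻¹) := by
    apply Matrix.inv_eq_left_inv
    rw [neg_mul_neg, Matrix.nonsing_inv_mul _ hdet]
  have hres := resolvent_nonneg hM (a := 0) (unit_of_hurwitz hH) 0 le_rfl
  rw [zero_smul_one_sub, hinv] at hres
  exact ⟨hdet, hres⟩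

/-- A Hurwitz Metzler matrix admits a positive vector with negative image. -/
lemma exists_pos_vec {M : Matrix m m ℝ} (hM : IsMetzler M) (hH : IsHurwitz M) :
    ∃ x : m → ℝ, (∀ i, 0 < x i) ∧ ∀ i, (M *ᵥ x) i < 0 := by
  obtain ⟨hdet, hres⟩ := neg_inv_nonneg hM hH
  set K : Matrix m m ℝ := -(M⁻¹) with hK
  refine ⟨K *ᵥ (fun _ => 1), fun i => ?_, fun i => ?_⟩
  · have hsum : (K *ᵥ (fun _ => 1)) i = ∑ j, K i j := by
      simp [Matrix.mulVec, dotProduct]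
    rw [hsum]
    by_contra hle
    push_neg at hle
    have hz : ∑ j, K i j = 0 :=
      le_antisymm hle (Finset.sum_nonneg fun j _ => hres i j)
    have hall : ∀ j, K i j = 0 := fun j =>
      (Finset.sum_eq_zero_iff_of_nonneg (fun j _ => hres i j)).mp hz j (Finset.mem_univ j)
    have hKM : K * (-M) = 1 := by
      rw [hK, neg_mul_neg, Matrix.nonsing_inv_mul _ hdet]
    have hzero : (K * (-M)) i i = 0 := by
      rw [Matrix.mul_apply]
      exact Finset.sum_eq_zero fun j _ => by rw [hall j, zero_mul]
    rw [hKM, Matrix.one_apply_eq] at hzero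
    exact one_ne_zero hzero
  · have heq : M *ᵥ (K *ᵥ (fun _ => 1)) = (M * K) *ᵥ (fun _ => 1) := Matrix.mulVec_mulVec _ _ _
    rw [heq, hK, Matrix.mul_neg, Matrix.mul_nonsing_inv _ hdet]
    simp [Matrix.neg_mulVec, Matrix.one_mulVec]

lemma mulVec_nonneg {l n : Type*} [Fintype n] {A : Matrix l n ℝ} (hA : ∀ i j, 0 ≤ A i j)
    {u : n → ℝ} (hu : ∀ j, 0 ≤ u j) : ∀ i, 0 ≤ (A *ᵥ u) i := fun i => by
  rw [Matrix.mulVec, dotProduct]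
  exact Finset.sum_nonneg fun j _ => mul_nonneg (hA i j) (hu j)

lemma mulVec_mono {l n : Type*} [Fintype n] {A : Matrix l n ℝ} (hA : ∀ i j, 0 ≤ A i j)
    {u v : n → ℝ} (huv : ∀ j, u j ≤ v j) : ∀ i, (A *ᵥ u) i ≤ (A *ᵥ v) i := fun i => by
  rw [Matrix.mulVec, Matrix.mulVec, dotProduct, dotProduct]
  exact Finset.sum_le_sum fun j _ => mul_le_mul_of_nonneg_left (huv j) (hA i j)

end SpectralPart

end MetzlerSchurAux

open MetzlerSchurAux in
/-- Schur complement characterization of Hurwitzness for Metzler matrices. -/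
theorem metzler_hurwitz_iff_block_and_schur_hurwitz
    {k l : ℕ}
    (A11 : Matrix (Fin k) (Fin k) ℝ) (A12 : Matrix (Fin k) (Fin l) ℝ)
    (A21 : Matrix (Fin l) (Fin k) ℝ) (A22 : Matrix (Fin l) (Fin l) ℝ)
    (hMetz : IsMetzler (Matrix.fromBlocks A11 A12 A21 A22))
    (hInv : IsUnit A11.det) :
    IsHurwitz (Matrix.fromBlocks A11 A12 A21 A22) ↔
      (IsHurwitz A11 ∧ IsMetzler A11 ∧
       IsHurwitz (A22 - A21 * A11⁻¹ * A12) ∧ IsMetzler (A22 - A21 * A11⁻¹ * A12)) := by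
  have hA11M : IsMetzler A11 := fun i j hij =>
    by simpa using hMetz (Sum.inl i) (Sum.inl j) (by simpa using hij)
  have h12 : ∀ i j, 0 ≤ A12 i j := fun i j =>
    by simpa using hMetz (Sum.inl i) (Sum.inr j) (by simp)
  have h21 : ∀ i j, 0 ≤ A21 i j := fun i j =>
    by simpa using hMetz (Sum.inr i) (Sum.inl j) (by simp)
  have h22 : ∀ i j, i ≠ j → 0 ≤ A22 i j := fun i j hij =>
    by simpa using hMetz (Sum.inr i) (Sum.inr j) (by simpa using hij)
  constructor
  · -- forward
    intro hH
    obtain ⟨z, hzpos, hzneg⟩ := exists_pos_vec hMetz hH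
    set x : Fin k → ℝ := z ∘ Sum.inl with hxdef
    set y : Fin l → ℝ := z ∘ Sum.inr with hydef
    have hb1 : ∀ i, (A11 *ᵥ x) i + (A12 *ᵥ y) i < 0 := by
      intro i
      have := hzneg (Sum.inl i)
      rw [Matrix.fromBlocks_mulVec] at this
      simpa using this
    have hb2 : ∀ i, (A21 *ᵥ x) i + (A22 *ᵥ y) i < 0 := by
      intro i
      have := hzneg (Sum.inr i)
      rw [Matrix.fromBlocks_mulVec] at this
      simpa using this
    have hypos : ∀ i, 0 < y i := fun i => hzpos (Sum.inr i)
    have hxpos : ∀ i, 0 < x i := fun i => hzpos (Sum.inl i)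
    have h12y : ∀ i, 0 ≤ (A12 *ᵥ y) i := mulVec_nonneg h12 (fun j => (hypos j).le)
    have hA11x : ∀ i, (A11 *ᵥ x) i < 0 := fun i =>
      lt_of_le_of_lt (le_add_of_nonneg_right (h12y i)) (hb1 i)
    have hA11H : IsHurwitz A11 := hurwitz_of_pos_vec hA11M x hxpos hA11x
    obtain ⟨hdet11, hKnn⟩ := neg_inv_nonneg hA11M hA11H
    set K : Matrix (Fin k) (Fin k) ℝ := -(A11⁻¹) with hKdef
    have hSeq : A22 - A21 * A11⁻¹ * A12 = A22 + A21 * K * A12 := by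
      rw [hKdef, Matrix.mul_neg, Matrix.neg_mul, sub_eq_add_neg]
    have hSM : IsMetzler (A22 - A21 * A11⁻¹ * A12) := by
      intro i j hij
      rw [hSeq, Matrix.add_apply]
      have h1 : 0 ≤ (A21 * K * A12) i j :=
        mul_entry_nonneg (mul_entry_nonneg h21 hKnn) h12 i j
      have h2 : 0 ≤ A22 i j := h22 i j hij
      linarith
    -- S *ᵥ y is negative
    set w : Fin k → ℝ := A12 *ᵥ y with hwdef
    have hKw : ∀ i, (K *ᵥ w) i ≤ x i := by
      intro i
      have hle : ∀ j, w j ≤ -((A11 *ᵥ x) j) := fun j => by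
        have := hb1 j; rw [hwdef]; linarith
      have h1 : (K *ᵥ w) i ≤ (K *ᵥ (-(A11 *ᵥ x))) i := mulVec_mono hKnn hle i
      have h2 : (K *ᵥ (-(A11 *ᵥ x))) = x := by
        rw [Matrix.mulVec_neg, hKdef, Matrix.neg_mulVec, neg_neg, Matrix.mulVec_mulVec,
          Matrix.nonsing_inv_mul _ hInv, Matrix.one_mulVec]
      rw [h2] at h1; exact h1
    have hSy : ∀ i, ((A22 - A21 * A11⁻¹ * A12) *ᵥ y) i < 0 := by
      intro i
      have heq : ((A22 - A21 * A11⁻¹ * A12) *ᵥ y) i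
          = (A22 *ᵥ y) i + (A21 *ᵥ (K *ᵥ w)) i := by
        rw [hSeq, Matrix.add_mulVec, Pi.add_apply]
        congr 1
        rw [← Matrix.mulVec_mulVec, ← Matrix.mulVec_mulVec, hwdef]
      rw [heq]
      have h1 : (A21 *ᵥ (K *ᵥ w)) i ≤ (A21 *ᵥ x) i := mulVec_mono h21 hKw i
      have := hb2 i
      linarith
    exact ⟨hA11H, hA11M, hurwitz_of_pos_vec hSM y hypos hSy, hSM⟩
  · -- backward
    rintro ⟨hA11H, _, hSH, hSM⟩
    obtain ⟨x₀, hx₀pos, hx₀neg⟩ := exists_pos_vec hA11M hA11H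
    obtain ⟨y, hypos, hSy⟩ := exists_pos_vec hSM hSH
    obtain ⟨hdet11, hKnn⟩ := neg_inv_nonneg hA11M hA11H
    set K : Matrix (Fin k) (Fin k) ℝ := -(A11⁻¹) with hKdef
    set w : Fin k → ℝ := A12 *ᵥ y with hwdef
    -- choose ε
    have hεex : ∃ ε : ℝ, 0 < ε ∧ ∀ i, ε * (A21 *ᵥ x₀) i + ((A22 - A21 * A11⁻¹ * A12) *ᵥ y) i < 0 := by
      rcases isEmpty_or_nonempty (Fin l) with hE | hNE
      · exact ⟨1, one_pos, fun i => (hE.false i).elim⟩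
      · set g : Fin l → ℝ :=
          fun i => (-(((A22 - A21 * A11⁻¹ * A12) *ᵥ y) i)) / (|(A21 *ᵥ x₀) i| + 1) with hg
        have hgpos : ∀ i, 0 < g i := fun i =>
          div_pos (by have := hSy i; linarith) (by positivity)
        refine ⟨min 1 (Finset.univ.inf' Finset.univ_nonempty g), ?_, ?_⟩
        · exact lt_min one_pos ((Finset.lt_inf'_iff _).mpr fun i _ => hgpos i)
        · intro i
          set ε := min 1 (Finset.univ.inf' Finset.univ_nonempty g) with hε
          have hεpos : 0 < ε := lt_min one_pos ((Finset.lt_inf'_iff _).mpr fun i _ => hgpos i)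
          have hεg : ε ≤ g i :=
            le_trans (min_le_right _ _) (Finset.inf'_le _ (Finset.mem_univ i))
          have h1 : ε * (A21 *ᵥ x₀) i ≤ ε * |(A21 *ᵥ x₀) i| :=
            mul_le_mul_of_nonneg_left (le_abs_self _) hεpos.le
          have h2 : ε * |(A21 *ᵥ x₀) i| < ε * (|(A21 *ᵥ x₀) i| + 1) :=
            mul_lt_mul_of_pos_left (lt_add_one _) hεpos
          have h3 : ε * (|(A21 *ᵥ x₀) i| + 1) ≤ g i * (|(A21 *ᵥ x₀) i| + 1) :=
            mul_le_mul_of_nonneg_right hεg (by positivity)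
          have h4 : g i * (|(A21 *ᵥ x₀) i| + 1) = -(((A22 - A21 * A11⁻¹ * A12) *ᵥ y) i) := by
            rw [hg]
            exact div_mul_cancel₀ _ (by positivity)
          linarith
    obtain ⟨ε, hεpos, hεprop⟩ := hεex
    set x : Fin k → ℝ := (K *ᵥ w) + ε • x₀ with hxdef
    have hxpos : ∀ i, 0 < x i := by
      intro i
      have h1 : 0 ≤ (K *ᵥ w) i :=
        mulVec_nonneg hKnn (mulVec_nonneg h12 fun j => (hypos j).le) i
      have h2 : 0 < ε * x₀ i := mul_pos hεpos (hx₀pos i)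
      simp only [hxdef, Pi.add_apply, Pi.smul_apply, smul_eq_mul]
      linarith
    have hA11Kw : A11 *ᵥ (K *ᵥ w) = -w := by
      rw [hKdef, Matrix.neg_mulVec, Matrix.mulVec_neg, Matrix.mulVec_mulVec,
        Matrix.mul_nonsing_inv _ hInv, Matrix.one_mulVec]
    have hb1 : ∀ i, (A11 *ᵥ x) i + (A12 *ᵥ y) i < 0 := by
      intro i
      have heq : (A11 *ᵥ x) i = -w i + ε * (A11 *ᵥ x₀) i := by
        rw [hxdef, Matrix.mulVec_add, Matrix.mulVec_smul, hA11Kw]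
        simp
      rw [heq, ← hwdef]
      have := hx₀neg i
      have h2 : ε * (A11 *ᵥ x₀) i < 0 := mul_neg_of_pos_of_neg hεpos this
      linarith
    have hSyeq : ∀ i, ((A22 - A21 * A11⁻¹ * A12) *ᵥ y) i = (A22 *ᵥ y) i + (A21 *ᵥ (K *ᵥ w)) i := by
      intro i
      have hSeq : A22 - A21 * A11⁻¹ * A12 = A22 + A21 * K * A12 := by
        rw [hKdef, Matrix.mul_neg, Matrix.neg_mul, sub_eq_add_neg]
      rw [hSeq, Matrix.add_mulVec, Pi.add_apply]
      congr 1
      rw [← Matrix.mulVec_mulVec, ← Matrix.mulVec_mulVec, hwdef]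
    have hb2 : ∀ i, (A21 *ᵥ x) i + (A22 *ᵥ y) i < 0 := by
      intro i
      have heq : (A21 *ᵥ x) i = (A21 *ᵥ (K *ᵥ w)) i + ε * (A21 *ᵥ x₀) i := by
        rw [hxdef, Matrix.mulVec_add, Matrix.mulVec_smul]
        simp
      rw [heq]
      have := hεprop i
      rw [hSyeq i] at this
      linarith
    -- assemble
    set z : Fin k ⊕ Fin l → ℝ := Sum.elim x y with hzdef
    refine hurwitz_of_pos_vec hMetz z (fun i => ?_) (fun i => ?_)
    · cases i with
      | inl a => simpa [hzdef] using hxpos a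
      | inr a => simpa [hzdef] using hypos a
    · rw [hzdef, Matrix.fromBlocks_mulVec]
      cases i with
      | inl a => simpa [Sum.elim_comp_inl, Sum.elim_comp_inr] using hb1 a
      | inr a => simpa [Sum.elim_comp_inl, Sum.elim_comp_inr] using hb2 a
end

section
/- Consider the coupled bi-virus SIS ODE system on ℝ^{3n}: ẋ¹ᵢ = -δ¹ᵢx¹ᵢ + δ²ᵢzᵢ + (1-x¹ᵢ-x²ᵢ-zᵢ)Σⱼβ¹ᵢⱼ(x¹ⱼ+zⱼ) - x¹ᵢ ε¹ Σⱼβ²ᵢⱼ(x²ⱼ+zⱼ); ẋ²ᵢ = -δ²ᵢx²ᵢ + δ¹ᵢzᵢ + (1-x¹ᵢ-x²ᵢ-zᵢ)Σⱼβ²ᵢⱼ(x²ⱼ+zⱼ) - x²ᵢ ε² Σⱼβ¹ᵢⱼ(x¹ⱼ+zⱼ); żᵢ = -(δ¹ᵢ+δ²ᵢ)zᵢ + x¹ᵢ ε¹ Σⱼβ²ᵢⱼ(x²ⱼ+zⱼ) + x²ᵢ ε² Σⱼβ¹ᵢⱼ(x¹ⱼ+zⱼ). Assume all δᵏᵢ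 ≥ 0, βᵏᵢⱼ ≥ 0, εᵏ ≥ 0. Then the set D = {(x¹,x²,z) : x¹ ≥ 0, x² ≥ 0, z ≥ 0, x¹+x²+z ≤ 1} is positively invariant: any solution with initial state in D satisfies x¹ᵢ(t), x²ᵢ(t), zᵢ(t), x¹ᵢ(t)+x²ᵢ(t)+zᵢ(t) ∈ [0,1] for all i and all t ≥ 0. -/
/-!
Write `D` as the set where the `4n` affine functions `-x¹ᵢ`, `-x²ᵢ`, `-zᵢ`, `x¹ᵢ + x²ᵢ + zᵢ - 1`
are `≤ 0`, and follow the largest of them (and `0`). On the enlarged region where all of them are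
`≤ F ≤ 1`, a constraint attaining the maximum `F` grows at rate at most `K F`: for `F = 0` this says
that the field points into `D` on its boundary, and relaxing the constraints by `F` costs a factor
`F` in every term. The upper right Dini derivative of a finite maximum is the largest derivative
among the functions attaining it, so Gronwall's inequality keeps the maximum at `0`.
-/

open Matrix Polynomial

variable {m : Type*} [Fintype m] [DecidableEq m]

open Finset Filter Topology Set

section MaxPrinciple

variable {ι : Type*} [Fintype ι]

theorem eventually_slope_sup'_lt [Nonempty ι] {g : ι → ℝ → ℝ} {G : ι → ℝ} {x r : ℝ}
    (hg : ∀ k, HasDerivAt (g k) (G k) x)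
    (hr : ∀ k, g k x = univ.sup' univ_nonempty (g · x) → G k < r) :
    ∀ᶠ y in 𝓝[>] x, slope (fun t ↦ univ.sup' univ_nonempty (g · t)) x y < r := by
  set f : ℝ → ℝ := fun t ↦ univ.sup' univ_nonempty (g · t) with hf
  have hfx : ContinuousAt f x :=
    ContinuousAt.finset_sup'_apply _ fun k _ ↦ (hg k).continuousAt
  have inactive : ∀ᶠ y in 𝓝[>] x, ∀ k, g k x < f x → g k y < f y :=
    eventually_all.2 fun k ↦ eventually_imp_distrib_left.2 fun hk ↦
      nhdsWithin_le_nhds ((hg k).continuousAt.eventually_lt hfx hk)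
  have active : ∀ᶠ y in 𝓝[>] x, ∀ k, g k x = f x → slope (g k) x y < r :=
    eventually_all.2 fun k ↦ eventually_imp_distrib_left.2 fun hk ↦
      ((hasDerivAt_iff_tendsto_slope.1 (hg k)).mono_left (nhdsGT_le_nhdsNE x)).eventually_lt_const
        (hr k hk)
  filter_upwards [inactive, active] with y hin hact
  obtain ⟨k, -, hk⟩ := exists_mem_eq_sup' univ_nonempty (g · y)
  have hkx : g k x = f x :=
    (le_sup' (g · x) (mem_univ k)).antisymm (not_lt.1 fun h ↦ (hin k h).ne hk.symm)
  have hslope : slope f x y = slope (g k) x y := by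
    simp only [slope_def_field, hkx, hf, hk]
  exact hslope ▸ hact k hkx

theorem nonpos_of_hasDerivAt_le_mul_at_max [Nonempty ι] {g G : ι → ℝ → ℝ} {K : ℝ}
    (hg : ∀ k t, HasDerivAt (g k) (G k t) t) (h0 : ∀ k, g k 0 ≤ 0)
    (hK : ∀ t ≥ 0, ∀ k, (∀ j, g j t ≤ g k t) → g k t ≤ 1 → G k t ≤ K * g k t) :
    ∀ t ≥ 0, ∀ k, g k t ≤ 0 := by
  set f : ℝ → ℝ := fun t ↦ univ.sup' univ_nonempty (g · t)
  have hfc : Continuous f := Continuous.finset_sup'_apply _ fun k _ ↦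
    continuous_iff_continuousAt.2 fun t ↦ (hg k t).continuousAt
  suffices ∀ t ≥ 0, f t ≤ 0 from fun t ht k ↦ (le_sup' (g · t) (mem_univ k)).trans (this t ht)
  intro t ht
  by_contra! hft
  -- `sInf S` is the first time `f` reaches `c`; before it `f ≤ 1`, so Gronwall applies on
  -- `[0, sInf S]` and gives `f (sInf S) ≤ 0 < c`.
  set c := min 1 (f t)
  set S := Icc 0 t ∩ {s | c ≤ f s}
  have hSbdd : BddBelow S := ⟨0, fun s hs ↦ hs.1.1⟩
  have hb : sInf S ∈ S := (isClosed_Icc.inter (isClosed_le continuous_const hfc)).csInf_mem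
    ⟨t, ⟨ht, le_rfl⟩, min_le_right 1 (f t)⟩ hSbdd
  have below : ∀ s ∈ Ico 0 (sInf S), f s < c := fun s hs ↦ lt_of_not_ge fun h ↦
    hs.2.not_ge (csInf_le hSbdd ⟨⟨hs.1, hs.2.le.trans hb.1.2⟩, h⟩)
  have hderiv : ∀ s ∈ Ico 0 (sInf S), ∀ r, K * f s < r →
      ∃ᶠ y in 𝓝[>] s, (y - s)⁻¹ * (f y - f s) < r := by
    intro s hs r hr
    refine (eventually_slope_sup'_lt (fun k ↦ hg k s) fun k hk ↦ ?_).frequently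
    have hmax : ∀ j, g j s ≤ g k s := fun j ↦ hk ▸ le_sup' (g · s) (mem_univ j)
    have hle : g k s ≤ 1 := hk ▸ (below s hs).le.trans (min_le_left _ _)
    exact (hK s hs.1 k hmax hle).trans_lt (hk ▸ hr)
  have hf0 : f 0 ≤ 0 := sup'_le _ _ fun k _ ↦ h0 k
  have hgronwall := le_gronwallBound_of_liminf_deriv_right_le hfc.continuousOn hderiv hf0
    (fun s _ ↦ (add_zero _).ge) (sInf S) ⟨hb.1.1, le_rfl⟩
  rw [gronwallBound_ε0_δ0] at hgronwall
  exact (lt_min one_pos hft).not_ge (hb.2.trans hgronwall)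

theorem nonpos_of_hasDerivAt_le_mul_at_nonneg_max {g G : ι → ℝ → ℝ} (K : ι → ℝ)
    (hg : ∀ k t, HasDerivAt (g k) (G k t) t) (h0 : ∀ k, g k 0 ≤ 0)
    (hK : ∀ t ≥ 0, ∀ k, (∀ j, g j t ≤ g k t) → 0 ≤ g k t → g k t ≤ 1 → G k t ≤ K k * g k t) :
    ∀ t ≥ 0, ∀ k, g k t ≤ 0 := by
  have hKsum : ∀ k, K k ≤ ∑ j, |K j| := fun k ↦
    (le_abs_self _).trans (single_le_sum (fun j _ ↦ abs_nonneg (K j)) (mem_univ k))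
  -- adjoin the zero function, so that the maximum is always nonnegative
  have h := nonpos_of_hasDerivAt_le_mul_at_max (g := fun o : Option ι ↦ o.elim 0 g)
    (G := fun o ↦ o.elim 0 G) (K := ∑ j, |K j|)
    (by rintro (_ | k) t; exacts [hasDerivAt_const t 0, hg k t])
    (by rintro (_ | k); exacts [le_rfl, h0 k])
    (by
      rintro t ht (_ | k) hmax hle
      · simp
      · have hk0 : 0 ≤ g k t := hmax none
        exact (hK t ht k (fun j ↦ hmax (some j)) hk0 hle).trans
          (mul_le_mul_of_nonneg_right (hKsum k) hk0))
  exact fun t ht k ↦ h t ht (some k)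

end MaxPrinciple

theorem mul_le_mul_mul_of_mem_Icc {w P α β R F : ℝ} (hα : 0 ≤ α) (hF : 0 ≤ F)
    (hw : w ∈ Icc (-α) F) (hP : P ∈ Icc (-(β * F) * R) (α * β * R)) :
    w * P ≤ α * β * R * F := by
  obtain ⟨hw, hw'⟩ := hw
  obtain ⟨hP, hP'⟩ := hP
  rcases le_total 0 P with hP0 | hP0
  · nlinarith [mul_le_mul_of_nonneg_right hw' hP0, mul_le_mul_of_nonneg_left hP' hF]
  · nlinarith [mul_le_mul_of_nonpos_right hw hP0, mul_le_mul_of_nonneg_left hP hα]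

section MulVec

variable {m n R : Type*} [Fintype n] [CommSemiring R] [PartialOrder R] [IsOrderedRing R]
  {A : Matrix m n R} {v : n → R} {i : m}

theorem Matrix.mulVec_apply_mem_Icc {lo hi : R} (hA : ∀ j, 0 ≤ A i j)
    (hv : ∀ j, v j ∈ Icc lo hi) : (A *ᵥ v) i ∈ Icc (lo * ∑ j, A i j) (hi * ∑ j, A i j) := by
  simp only [mulVec, dotProduct, Set.mem_Icc, mul_sum]
  constructor <;> refine sum_le_sum fun j _ ↦ ?_
  · exact (mul_comm _ _).trans_le (mul_le_mul_of_nonneg_left (hv j).1 (hA j))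
  · exact (mul_le_mul_of_nonneg_left (hv j).2 (hA j)).trans_eq (mul_comm _ _)

end MulVec

namespace BiVirus

variable {n : ℕ}

/-- The four constraints cutting out `D` at node `i`, as `violation a₁ a₂ c (i, k) ≤ 0`. -/
def violation (a₁ a₂ c : Fin n → ℝ) (p : Fin n × Fin 4) : ℝ :=
  ![-a₁ p.1, -a₂ p.1, -c p.1, a₁ p.1 + a₂ p.1 + c p.1 - 1] p.2

def violationRate (v₁ v₂ w : Fin n → ℝ) (p : Fin n × Fin 4) : ℝ :=
  ![-v₁ p.1, -v₂ p.1, -w p.1, v₁ p.1 + v₂ p.1 + w p.1] p.2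

theorem forall_violation_le_iff {a₁ a₂ c : Fin n → ℝ} {F : ℝ} :
    (∀ p, violation a₁ a₂ c p ≤ F) ↔
      ∀ i, -F ≤ a₁ i ∧ -F ≤ a₂ i ∧ -F ≤ c i ∧ a₁ i + a₂ i + c i ≤ 1 + F := by
  simp [violation, Prod.forall, Fin.forall_fin_succ, forall_and, neg_le, add_comm F]

theorem hasDerivAt_violation {x₁ x₂ z v₁ v₂ w : ℝ → Fin n → ℝ}
    (h₁ : ∀ t i, HasDerivAt (x₁ · i) (v₁ t i) t) (h₂ : ∀ t i, HasDerivAt (x₂ · i) (v₂ t i) t)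
    (hz : ∀ t i, HasDerivAt (z · i) (w t i) t) (p : Fin n × Fin 4) (t : ℝ) :
    HasDerivAt (fun s ↦ violation (x₁ s) (x₂ s) (z s) p)
      (violationRate (v₁ t) (v₂ t) (w t) p) t := by
  obtain ⟨i, k⟩ := p
  fin_cases k
  · exact (h₁ t i).neg
  · exact (h₂ t i).neg
  · exact (hz t i).neg
  · exact (((h₁ t i).add (h₂ t i)).add (hz t i)).sub_const 1

variable (δ₁ δ₂ : Fin n → ℝ) (B₁ B₂ : Matrix (Fin n) (Fin n) ℝ) (ε₁ ε₂ : ℝ) (a₁ a₂ c : Fin n → ℝ)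

-- The right-hand sides of the equations for `ẋ¹`, `ẋ²`, `ż`.
def rate₁ (i : Fin n) : ℝ :=
  -δ₁ i * a₁ i + δ₂ i * c i + (1 - a₁ i - a₂ i - c i) * (B₁ *ᵥ (a₁ + c)) i
    - a₁ i * ε₁ * (B₂ *ᵥ (a₂ + c)) i

def rate₂ (i : Fin n) : ℝ :=
  -δ₂ i * a₂ i + δ₁ i * c i + (1 - a₁ i - a₂ i - c i) * (B₂ *ᵥ (a₂ + c)) i
    - a₂ i * ε₂ * (B₁ *ᵥ (a₁ + c)) i

def rateZ (i : Fin n) : ℝ :=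
  -(δ₁ i + δ₂ i) * c i + a₁ i * ε₁ * (B₂ *ᵥ (a₂ + c)) i + a₂ i * ε₂ * (B₁ *ᵥ (a₁ + c)) i

variable {δ₁ δ₂ B₁ B₂ ε₁ ε₂}

theorem exists_violationRate_le_mul (hδ₁ : ∀ i, 0 ≤ δ₁ i) (hδ₂ : ∀ i, 0 ≤ δ₂ i)
    (hB₁ : ∀ i j, 0 ≤ B₁ i j) (hB₂ : ∀ i j, 0 ≤ B₂ i j) (hε₁ : 0 ≤ ε₁) (hε₂ : 0 ≤ ε₂) :
    ∃ K : Fin n × Fin 4 → ℝ, ∀ (a₁ a₂ c : Fin n → ℝ) (p : Fin n × Fin 4),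
      (∀ q, violation a₁ a₂ c q ≤ violation a₁ a₂ c p) → 0 ≤ violation a₁ a₂ c p →
      violation a₁ a₂ c p ≤ 1 →
      violationRate (rate₁ δ₁ δ₂ B₁ B₂ ε₁ a₁ a₂ c) (rate₂ δ₁ δ₂ B₁ B₂ ε₂ a₁ a₂ c)
        (rateZ δ₁ δ₂ B₁ B₂ ε₁ ε₂ a₁ a₂ c) p ≤ K p * violation a₁ a₂ c p := by
  refine ⟨fun p ↦ ![δ₂ p.1 + 8 * (∑ j, B₁ p.1 j + ε₁ * ∑ j, B₂ p.1 j),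
    δ₁ p.1 + 8 * (∑ j, B₂ p.1 j + ε₂ * ∑ j, B₁ p.1 j),
    8 * (ε₁ * ∑ j, B₂ p.1 j + ε₂ * ∑ j, B₁ p.1 j),
    δ₁ p.1 + δ₂ p.1 + 8 * (∑ j, B₁ p.1 j + ∑ j, B₂ p.1 j)] p.2, ?_⟩
  rintro a₁ a₂ c ⟨i, k⟩ hmax hF0 hF1
  generalize hF : violation a₁ a₂ c (i, k) = F at hmax hF0 hF1 ⊢
  have hD := forall_violation_le_iff.1 hmax
  -- With `F ≤ 1` every factor multiplying an infection pressure lies in `[-4, F]`, and the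
  -- pressures lie in `[-2F R, 8 R]` for `R` the row sum of `B₁` or `B₂`.
  have hv : ∀ j, a₁ j + c j ∈ Icc (-(2 * F)) (4 * 2) ∧ a₂ j + c j ∈ Icc (-(2 * F)) (4 * 2) := by
    intro j
    obtain ⟨h₁, h₂, h₃, h₄⟩ := hD j
    refine ⟨⟨?_, ?_⟩, ?_, ?_⟩ <;> linarith
  have hP₁ := mulVec_apply_mem_Icc (v := a₁ + c) (hB₁ i) fun j ↦ (hv j).1
  have hP₂ := mulVec_apply_mem_Icc (v := a₂ + c) (hB₂ i) fun j ↦ (hv j).2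
  obtain ⟨h₁, h₂, h₃, h₄⟩ := hD i
  have key {w P R : ℝ} (hw : w ∈ Icc (-4) F) (hP : P ∈ Icc (-(2 * F) * R) (4 * 2 * R)) :=
    mul_le_mul_mul_of_mem_Icc (by norm_num) hF0 hw hP
  fin_cases k <;>
    simp only [violation, violationRate, rate₁, rate₂, rateZ, Fin.zero_eta, Fin.mk_one,
      Fin.reduceFinMk, Fin.isValue, Matrix.cons_val] at hF ⊢
  · subst hF
    have k₁ := key (w := a₁ i + a₂ i + c i - 1) ⟨by linarith, by linarith⟩ hP₁
    have k₂ := key (w := a₁ i) ⟨by linarith, by linarith⟩ hP₂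
    linarith [mul_le_mul_of_nonneg_left k₂ hε₁, mul_nonneg (hδ₁ i) hF0,
      mul_nonneg (hδ₂ i) (by linarith : 0 ≤ c i - a₁ i)]
  · subst hF
    have k₁ := key (w := a₁ i + a₂ i + c i - 1) ⟨by linarith, by linarith⟩ hP₂
    have k₂ := key (w := a₂ i) ⟨by linarith, by linarith⟩ hP₁
    linarith [mul_le_mul_of_nonneg_left k₂ hε₂, mul_nonneg (hδ₂ i) hF0,
      mul_nonneg (hδ₁ i) (by linarith : 0 ≤ c i - a₂ i)]
  · subst hF
    have k₁ := key (w := -a₁ i) ⟨by linarith, by linarith⟩ hP₂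
    have k₂ := key (w := -a₂ i) ⟨by linarith, by linarith⟩ hP₁
    linarith [mul_le_mul_of_nonneg_left k₁ hε₁, mul_le_mul_of_nonneg_left k₂ hε₂,
      mul_nonneg (add_nonneg (hδ₁ i) (hδ₂ i)) hF0]
  · subst hF
    have k₁ := key (w := 1 - a₁ i - a₂ i - c i) ⟨by linarith, by linarith⟩ hP₁
    have k₂ := key (w := 1 - a₁ i - a₂ i - c i) ⟨by linarith, by linarith⟩ hP₂
    linarith [mul_nonneg (hδ₁ i) (by linarith : 0 ≤ a₁ i + (a₁ i + a₂ i + c i - 1)),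
      mul_nonneg (hδ₂ i) (by linarith : 0 ≤ a₂ i + (a₁ i + a₂ i + c i - 1))]

end BiVirus

open BiVirus

/-- The set D is positively invariant for the coupled bi-virus SIS dynamics. -/
theorem coupled_bivirus_positively_invariant
    {n : ℕ} (δ1 δ2 : Fin n → ℝ) (B1 B2 : Matrix (Fin n) (Fin n) ℝ) (ε1 ε2 : ℝ)
    (hδ1 : ∀ i, 0 ≤ δ1 i) (hδ2 : ∀ i, 0 ≤ δ2 i)
    (hB1 : ∀ i j, 0 ≤ B1 i j) (hB2 : ∀ i j, 0 ≤ B2 i j)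
    (hε1 : 0 ≤ ε1) (hε2 : 0 ≤ ε2)
    (x1 x2 z : ℝ → Fin n → ℝ)
    (hx1 : ∀ t (i : Fin n), HasDerivAt (fun s => x1 s i)
      (-δ1 i * x1 t i + δ2 i * z t i
        + (1 - x1 t i - x2 t i - z t i) * ∑ j, B1 i j * (x1 t j + z t j)
        - x1 t i * ε1 * ∑ j, B2 i j * (x2 t j + z t j)) t)
    (hx2 : ∀ t (i : Fin n), HasDerivAt (fun s => x2 s i)
      (-δ2 i * x2 t i + δ1 i * z t i
        + (1 - x1 t i - x2 t i - z t i) * ∑ j, B2 i j * (x2 t j + z t j)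
        - x2 t i * ε2 * ∑ j, B1 i j * (x1 t j + z t j)) t)
    (hz : ∀ t (i : Fin n), HasDerivAt (fun s => z s i)
      (-(δ1 i + δ2 i) * z t i
        + x1 t i * ε1 * ∑ j, B2 i j * (x2 t j + z t j)
        + x2 t i * ε2 * ∑ j, B1 i j * (x1 t j + z t j)) t)
    (h0 : ∀ i : Fin n, 0 ≤ x1 0 i ∧ 0 ≤ x2 0 i ∧ 0 ≤ z 0 i ∧
      x1 0 i + x2 0 i + z 0 i ≤ 1) :
    ∀ t ≥ (0 : ℝ), ∀ i : Fin n,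
      x1 t i ∈ Set.Icc (0 : ℝ) 1 ∧ x2 t i ∈ Set.Icc (0 : ℝ) 1 ∧
      z t i ∈ Set.Icc (0 : ℝ) 1 ∧
      x1 t i + x2 t i + z t i ∈ Set.Icc (0 : ℝ) 1 := by
  obtain ⟨K, hK⟩ := exists_violationRate_le_mul hδ1 hδ2 hB1 hB2 hε1 hε2
  have hviol := nonpos_of_hasDerivAt_le_mul_at_nonneg_max K (hasDerivAt_violation hx1 hx2 hz)
    (forall_violation_le_iff.2 (by simpa using h0)) fun t _ ↦ hK (x1 t) (x2 t) (z t)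
  intro t ht i
  obtain ⟨h₁, h₂, h₃, h₄⟩ := forall_violation_le_iff.1 (hviol t ht) i
  simp only [neg_zero, add_zero] at h₁ h₂ h₃ h₄
  simp only [Set.mem_Icc]
  refine ⟨⟨?_, ?_⟩, ⟨?_, ?_⟩, ⟨?_, ?_⟩, ?_, ?_⟩ <;> linarith
end

section
/- Let B be an irreducible nonnegative n×n matrix, D a positive diagonal n×n matrix, and x̂¹, x̂², ẑ ∈ ℝⁿ strictly positive vectors with x̂¹ + x̂² + ẑ ≪ 1 (entrywise). If -D(x̂¹+x̂²) + (I - X̂¹ - X̂² - Ẑ)B(x̂¹+x̂²+2ẑ) = 0, where X̂¹, X̂², Ẑ denote the corresponding diagonal matrices, then ρ((I-X̂¹-X̂²-Ẑ)D⁻¹B) < 1. -/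
open Matrix Polynomial

variable {m : Type*} [Fintype m] [DecidableEq m]

lemma charpoly_eval_eq {n : ℕ} (M : Matrix (Fin n) (Fin n) ℂ) (x : ℂ) :
    M.charpoly.eval x = (Matrix.diagonal (fun _ => x) - M).det := by
  rw [Matrix.charpoly, ← Polynomial.coe_evalRingHom, RingHom.map_det]
  congr 1
  ext i j
  by_cases h : i = j <;>
    simp [Matrix.charmatrix_apply, h, Matrix.diagonal_apply]

lemma eig_bound {n : ℕ} (M : Matrix (Fin n) (Fin n) ℝ) (hM : ∀ i j, 0 ≤ M i j)
    (v : Fin n → ℝ) (hv : ∀ i, 0 < v i) (θ : ℝ)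
    (hθ : ∀ i, M.mulVec v i ≤ θ * v i)
    (μ : ℂ) (hμ : μ ∈ M.charpoly.aroots ℂ) : ‖μ‖ ≤ θ := by
  rw [Polynomial.aroots_def, Polynomial.mem_roots, ← Matrix.charpoly_map] at hμ
  · set M' : Matrix (Fin n) (Fin n) ℂ := M.map (algebraMap ℝ ℂ) with hM'
    have hdet : (Matrix.diagonal (fun _ => μ) - M').det = 0 := by
      rw [← charpoly_eval_eq]; exact hμ
    obtain ⟨u, hu0, hu⟩ := (Matrix.exists_mulVec_eq_zero_iff).2 hdet
    have huv : ∀ i, M'.mulVec u i = μ * u i := by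
      intro i
      have := congrFun hu i
      simp [Matrix.sub_mulVec, Matrix.mulVec_diagonal, sub_eq_zero] at this
      rw [← this]
    obtain ⟨k, hk0⟩ := Function.ne_iff.1 hu0
    have hk : u k ≠ 0 := by simpa using hk0
    have : Nonempty (Fin n) := ⟨k⟩
    obtain ⟨i, -, hi⟩ := Finset.exists_max_image Finset.univ
      (fun j => ‖u j‖ / v j) ⟨k, Finset.mem_univ k⟩
    have hgi : 0 < ‖u i‖ / v i :=
      lt_of_lt_of_le (div_pos (norm_pos_iff.mpr hk) (hv k)) (hi k (Finset.mem_univ k))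
    have hui : 0 < ‖u i‖ := by
      have := mul_pos hgi (hv i)
      rwa [div_mul_cancel₀ _ (ne_of_gt (hv i))] at this
    have hbound : ∀ j, ‖u j‖ ≤ (‖u i‖ / v i) * v j := by
      intro j
      rw [← div_le_iff₀ (hv j)]
      exact hi j (Finset.mem_univ j)
    have key : ‖μ‖ * ‖u i‖ ≤ θ * ‖u i‖ := by
      have h1 : ‖μ‖ * ‖u i‖ = ‖M'.mulVec u i‖ := by
        rw [huv i]; exact (norm_mul μ (u i)).symm
      rw [h1]
      have h2 : ‖M'.mulVec u i‖ ≤ ∑ j, M i j * ‖u j‖ := by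
        have : M'.mulVec u i = ∑ j, M' i j * u j := rfl
        rw [this]
        refine le_trans (norm_sum_le _ _) (Finset.sum_le_sum fun j _ => ?_)
        rw [norm_mul]
        simp only [hM', Matrix.map_apply]
        rw [show ‖(algebraMap ℝ ℂ) (M i j)‖ = |M i j| by simp,
          abs_of_nonneg (hM i j)]
      refine le_trans h2 ?_
      have h3 : ∑ j, M i j * ‖u j‖
          ≤ (‖u i‖ / v i) * (M.mulVec v i) := by
        have : M.mulVec v i = ∑ j, M i j * v j := rfl
        rw [this, Finset.mul_sum]
        refine Finset.sum_le_sum fun j _ => ?_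
        calc M i j * ‖u j‖ ≤ M i j * ((‖u i‖ / v i) * v j) :=
              mul_le_mul_of_nonneg_left (hbound j) (hM i j)
          _ = ‖u i‖ / v i * (M i j * v j) := by ring
      refine le_trans h3 ?_
      calc (‖u i‖ / v i) * (M.mulVec v i)
          ≤ (‖u i‖ / v i) * (θ * v i) :=
            mul_le_mul_of_nonneg_left (hθ i) (le_of_lt hgi)
        _ = θ * ((‖u i‖ / v i) * v i) := by ring
        _ = θ * ‖u i‖ := by rw [div_mul_cancel₀ _ (ne_of_gt (hv i))]
    exact le_of_mul_le_mul_right key hui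
  · exact ((M.charpoly_monic).map _).ne_zero

/-- Necessary condition for a fully coexisting equilibrium with identical viruses. -/
theorem coexisting_equilibrium_necessary_specRadius
    {n : ℕ} (d : Fin n → ℝ) (B : Matrix (Fin n) (Fin n) ℝ)
    (hd : ∀ i, 0 < d i)
    (hB : ∀ i j, 0 ≤ B i j) (hBirr : IsIrreducibleMat B)
    (x1 x2 z : Fin n → ℝ)
    (hx1 : ∀ i, 0 < x1 i) (hx2 : ∀ i, 0 < x2 i) (hz : ∀ i, 0 < z i)
    (hsum : ∀ i, x1 i + x2 i + z i < 1)
    (heq : -(Matrix.diagonal d).mulVec (x1 + x2)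
      + ((1 - Matrix.diagonal x1 - Matrix.diagonal x2 - Matrix.diagonal z) * B).mulVec
          (x1 + x2 + 2 • z) = 0) :
    specRadius ((1 - Matrix.diagonal x1 - Matrix.diagonal x2 - Matrix.diagonal z)
      * (Matrix.diagonal d)⁻¹ * B) < 1 := by
  set s : Fin n → ℝ := fun i => 1 - x1 i - x2 i - z i with hs_def
  have hs : ∀ i, 0 < s i := fun i => by have := hsum i; simp [hs_def]; linarith
  set v : Fin n → ℝ := fun i => x1 i + x2 i + 2 * z i with hv_def
  have hv : ∀ i, 0 < v i := fun i => by have := hx1 i; have := hx2 i; have := hz i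
                                        simp [hv_def]; linarith
  have hS : (1 - Matrix.diagonal x1 - Matrix.diagonal x2 - Matrix.diagonal z)
      = Matrix.diagonal s := by
    rw [← Matrix.diagonal_one, ← Matrix.diagonal_sub, ← Matrix.diagonal_sub,
      ← Matrix.diagonal_sub]
  have hDinv : (Matrix.diagonal d)⁻¹ = Matrix.diagonal (fun i => (d i)⁻¹) := by
    refine Matrix.inv_eq_right_inv ?_
    rw [Matrix.diagonal_mul_diagonal]
    rw [show (fun i => d i * (d i)⁻¹) = fun _ => (1 : ℝ) from
      funext fun i => mul_inv_cancel₀ (ne_of_gt (hd i)), Matrix.diagonal_one]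
  set M := (1 - Matrix.diagonal x1 - Matrix.diagonal x2 - Matrix.diagonal z)
      * (Matrix.diagonal d)⁻¹ * B with hM_def
  have hMeq : M = Matrix.diagonal (fun i => s i * (d i)⁻¹) * B := by
    rw [hM_def, hS, hDinv, Matrix.diagonal_mul_diagonal]
  have hMnn : ∀ i j, 0 ≤ M i j := by
    intro i j
    rw [hMeq]
    rw [Matrix.diagonal_mul]
    exact mul_nonneg (mul_nonneg (le_of_lt (hs i)) (inv_nonneg.2 (le_of_lt (hd i)))) (hB i j)
  -- pointwise equilibrium equation
  have hveq : (x1 + x2 + 2 • z) = v := by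
    funext i; simp [hv_def, two_smul]; ring
  have hptw : ∀ i, d i * (x1 i + x2 i) = s i * (B.mulVec v) i := by
    intro i
    have h := congrFun heq i
    rw [hS, hveq] at h
    simp only [Pi.add_apply, Pi.neg_apply, Pi.zero_apply, Matrix.mulVec_diagonal,
      ← Matrix.mulVec_mulVec] at h
    linarith [h]
  have hMv : ∀ i, M.mulVec v i = x1 i + x2 i := by
    intro i
    rw [hMeq, ← Matrix.mulVec_mulVec, Matrix.mulVec_diagonal]
    rw [mul_comm (s i) ((d i)⁻¹), mul_assoc, ← hptw i, ← mul_assoc,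
      inv_mul_cancel₀ (ne_of_gt (hd i)), one_mul]
  rcases Nat.eq_zero_or_pos n with h0 | hpos
  · subst h0
    have hcp : M.charpoly = 1 := by
      rw [Matrix.charpoly, Matrix.det_isEmpty]
    have hset : {x : ℝ | ∃ μ ∈ M.charpoly.aroots ℂ, x = ‖μ‖} = ∅ := by
      simp [hcp]
    rw [specRadius, hset, Real.sSup_empty]
    norm_num
  · have : Nonempty (Fin n) := ⟨⟨0, hpos⟩⟩
    set θ : ℝ := Finset.univ.sup' Finset.univ_nonempty (fun j => (x1 j + x2 j) / v j)
      with hθ_def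
    have hθlt : θ < 1 := by
      rw [hθ_def, Finset.sup'_lt_iff]
      intro j _
      rw [div_lt_one (hv j)]
      have := hz j; simp [hv_def]; linarith
    have hθ0 : 0 ≤ θ := by
      obtain ⟨i⟩ := ‹Nonempty (Fin n)›
      have h1 : (x1 i + x2 i) / v i ≤ θ := by
        rw [hθ_def]; exact Finset.le_sup' (fun j => (x1 j + x2 j) / v j) (Finset.mem_univ i)
      have := hx1 i; have := hx2 i; have := hv i
      refine le_trans ?_ h1
      positivity
    have hθb : ∀ i, M.mulVec v i ≤ θ * v i := by
      intro i
      rw [hMv i]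
      have h1 : (x1 i + x2 i) / v i ≤ θ := by
        rw [hθ_def]; exact Finset.le_sup' (fun j => (x1 j + x2 j) / v j) (Finset.mem_univ i)
      calc x1 i + x2 i = ((x1 i + x2 i) / v i) * v i :=
            (div_mul_cancel₀ _ (ne_of_gt (hv i))).symm
        _ ≤ θ * v i := mul_le_mul_of_nonneg_right h1 (le_of_lt (hv i))
    refine lt_of_le_of_lt ?_ hθlt
    rw [specRadius]
    refine Real.sSup_le ?_ hθ0
    rintro x ⟨μ, hμ, rfl⟩
    exact eig_bound M hMnn v hv θ hθb μ hμ
end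

section
/- Consider the coupled bi-virus equilibrium equations with positive healing rates δ¹ᵢ, δ²ᵢ > 0 and irreducible nonnegative B¹, B². If (x̄¹, x̄², z̄) is an equilibrium lying in D = {x¹,x²,z ≥ 0, x¹+x²+z ≤ 1}, then x̄¹ + x̄² + z̄ ≪ 1 (each component sum is strictly less than 1). -/
open Matrix Polynomial

variable {m : Type*} [Fintype m] [DecidableEq m]

/-- At any equilibrium of the coupled bi-virus system lying in D (with positive healing rates
and irreducible nonnegative infection matrices), the total infection level of each node is
strictly less than 1. -/
theorem equilibrium_total_infection_lt_one
    {n : ℕ} (δ1 δ2 : Fin n → ℝ) (B1 B2 : Matrix (Fin n) (Fin n) ℝ) (ε1 ε2 : ℝ)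
    (hδ1 : ∀ i, 0 < δ1 i) (hδ2 : ∀ i, 0 < δ2 i)
    (hB1 : ∀ i j, 0 ≤ B1 i j) (hB2 : ∀ i j, 0 ≤ B2 i j)
    (hB1irr : IsIrreducibleMat B1) (hB2irr : IsIrreducibleMat B2)
    (hε1 : 0 ≤ ε1) (hε2 : 0 ≤ ε2)
    (x1 x2 z : Fin n → ℝ)
    (hD : ∀ i, 0 ≤ x1 i ∧ 0 ≤ x2 i ∧ 0 ≤ z i ∧ x1 i + x2 i + z i ≤ 1)
    (heq1 : ∀ i, (0 : ℝ) = -δ1 i * x1 i + δ2 i * z i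
        + (1 - x1 i - x2 i - z i) * ∑ j, B1 i j * (x1 j + z j)
        - x1 i * ε1 * ∑ j, B2 i j * (x2 j + z j))
    (heq2 : ∀ i, (0 : ℝ) = -δ2 i * x2 i + δ1 i * z i
        + (1 - x1 i - x2 i - z i) * ∑ j, B2 i j * (x2 j + z j)
        - x2 i * ε2 * ∑ j, B1 i j * (x1 j + z j))
    (heqz : ∀ i, (0 : ℝ) = -(δ1 i + δ2 i) * z i
        + x1 i * ε1 * ∑ j, B2 i j * (x2 j + z j)
        + x2 i * ε2 * ∑ j, B1 i j * (x1 j + z j)) :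
    ∀ i, x1 i + x2 i + z i < 1 := by
  intro i
  by_contra h
  push_neg at h
  obtain ⟨hx1, hx2, hz, hle⟩ := hD i
  have hs : x1 i + x2 i + z i = 1 := le_antisymm hle h
  have h1 := heq1 i
  have h2 := heq2 i
  have h3 := heqz i
  have hzero : (1 - x1 i - x2 i - z i) = 0 := by linarith
  rw [hzero, zero_mul] at h1 h2
  have hsum : δ1 i * x1 i + δ2 i * x2 i = 0 := by linarith
  have hx10 : x1 i = 0 := by
    nlinarith [hδ1 i, hδ2 i, mul_nonneg (hδ1 i).le hx1, mul_nonneg (hδ2 i).le hx2]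
  have hx20 : x2 i = 0 := by
    nlinarith [hδ1 i, hδ2 i, mul_nonneg (hδ1 i).le hx1, mul_nonneg (hδ2 i).le hx2]
  have hz1 : z i = 1 := by linarith
  rw [hx10, hx20, hz1] at h3
  simp at h3
  linarith [hδ1 i, hδ2 i]
end

section
/- Consider the coupled bi-virus equilibrium equations with positive healing rates and irreducible nonnegative B¹, B², and let (x̂¹, x̂², ẑ) be an equilibrium in D with ẑᵢ > 0 for at least one i ∈ [n]. Then x̂¹ ≫ 0, x̂² ≫ 0, and ẑ ≫ 0 (all entries of all three vectors are strictly positive). -/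
open Matrix Polynomial

variable {m : Type*} [Fintype m] [DecidableEq m]

/-- If at an equilibrium in D some node has a positive doubly-infected fraction, then all
the equilibrium components of all nodes are strictly positive. -/
theorem equilibrium_strictly_positive_of_some_z_pos
    {n : ℕ} (δ1 δ2 : Fin n → ℝ) (B1 B2 : Matrix (Fin n) (Fin n) ℝ) (ε1 ε2 : ℝ)
    (hδ1 : ∀ i, 0 < δ1 i) (hδ2 : ∀ i, 0 < δ2 i)
    (hB1 : ∀ i j, 0 ≤ B1 i j) (hB2 : ∀ i j, 0 ≤ B2 i j)
    (hB1irr : IsIrreducibleMat B1) (hB2irr : IsIrreducibleMat B2)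
    (hε1 : 0 ≤ ε1) (hε2 : 0 ≤ ε2)
    (x1 x2 z : Fin n → ℝ)
    (hD : ∀ i, 0 ≤ x1 i ∧ 0 ≤ x2 i ∧ 0 ≤ z i ∧ x1 i + x2 i + z i ≤ 1)
    (heq1 : ∀ i, (0 : ℝ) = -δ1 i * x1 i + δ2 i * z i
        + (1 - x1 i - x2 i - z i) * ∑ j, B1 i j * (x1 j + z j)
        - x1 i * ε1 * ∑ j, B2 i j * (x2 j + z j))
    (heq2 : ∀ i, (0 : ℝ) = -δ2 i * x2 i + δ1 i * z i
        + (1 - x1 i - x2 i - z i) * ∑ j, B2 i j * (x2 j + z j)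
        - x2 i * ε2 * ∑ j, B1 i j * (x1 j + z j))
    (heqz : ∀ i, (0 : ℝ) = -(δ1 i + δ2 i) * z i
        + x1 i * ε1 * ∑ j, B2 i j * (x2 j + z j)
        + x2 i * ε2 * ∑ j, B1 i j * (x1 j + z j))
    (hzpos : ∃ i, 0 < z i) :
    ∀ i, 0 < x1 i ∧ 0 < x2 i ∧ 0 < z i := by
  have hx1n : ∀ i, 0 ≤ x1 i := fun i => (hD i).1
  have hx2n : ∀ i, 0 ≤ x2 i := fun i => (hD i).2.1
  have hzn : ∀ i, 0 ≤ z i := fun i => (hD i).2.2.1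
  have hr : ∀ i, 0 ≤ 1 - x1 i - x2 i - z i := fun i => by
    have := (hD i).2.2.2; linarith
  have hS1 : ∀ i, 0 ≤ ∑ j, B1 i j * (x1 j + z j) := fun i =>
    Finset.sum_nonneg fun j _ => mul_nonneg (hB1 i j) (add_nonneg (hx1n j) (hzn j))
  have hS2 : ∀ i, 0 ≤ ∑ j, B2 i j * (x2 j + z j) := fun i =>
    Finset.sum_nonneg fun j _ => mul_nonneg (hB2 i j) (add_nonneg (hx2n j) (hzn j))
  -- Key closure fact for x1
  have K1 : ∀ i, x1 i = 0 → z i = 0 ∧ ∀ j, B1 i j ≠ 0 → x1 j = 0 := by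
    intro i h0
    have e1 := heq1 i
    have t1 : -δ1 i * x1 i = 0 := by rw [h0]; ring
    have t3 : x1 i * ε1 * ∑ j, B2 i j * (x2 j + z j) = 0 := by rw [h0]; ring
    have t2 : 0 ≤ (1 - x1 i - x2 i - z i) * ∑ j, B1 i j * (x1 j + z j) :=
      mul_nonneg (hr i) (hS1 i)
    have hzz : δ2 i * z i = 0 :=
      le_antisymm (by linarith) (mul_nonneg (hδ2 i).le (hzn i))
    have hz0 : z i = 0 := by
      rcases mul_eq_zero.mp hzz with h | h
      · exact absurd h (ne_of_gt (hδ2 i))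
      · exact h
    have hb : (1 - x1 i - x2 i - z i) * ∑ j, B1 i j * (x1 j + z j) = 0 := by linarith
    have hSzero : ∑ j, B1 i j * (x1 j + z j) = 0 := by
      rcases mul_eq_zero.mp hb with hr0 | hs
      · exfalso
        have hx21 : x2 i = 1 := by linarith
        have e2 := heq2 i
        have u1 : -δ2 i * x2 i = -δ2 i := by rw [hx21]; ring
        have u2 : δ1 i * z i = 0 := by rw [hz0]; ring
        have u3 : (1 - x1 i - x2 i - z i) * ∑ j, B2 i j * (x2 j + z j) = 0 := by
          rw [hr0]; ring
        have u4 : 0 ≤ x2 i * ε2 * ∑ j, B1 i j * (x1 j + z j) :=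
          mul_nonneg (mul_nonneg (hx2n i) hε2) (hS1 i)
        have := hδ2 i
        linarith
      · exact hs
    refine ⟨hz0, fun j hj => ?_⟩
    have hterm : B1 i j * (x1 j + z j) = 0 :=
      (Finset.sum_eq_zero_iff_of_nonneg
        (fun k _ => mul_nonneg (hB1 i k) (add_nonneg (hx1n k) (hzn k)))).mp
        hSzero j (Finset.mem_univ j)
    rcases mul_eq_zero.mp hterm with h | h
    · exact absurd h hj
    · have := hx1n j; have := hzn j; linarith
  -- Key closure fact for x2
  have K2 : ∀ i, x2 i = 0 → z i = 0 ∧ ∀ j, B2 i j ≠ 0 → x2 j = 0 := by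
    intro i h0
    have e2 := heq2 i
    have t1 : -δ2 i * x2 i = 0 := by rw [h0]; ring
    have t3 : x2 i * ε2 * ∑ j, B1 i j * (x1 j + z j) = 0 := by rw [h0]; ring
    have t2 : 0 ≤ (1 - x1 i - x2 i - z i) * ∑ j, B2 i j * (x2 j + z j) :=
      mul_nonneg (hr i) (hS2 i)
    have hzz : δ1 i * z i = 0 :=
      le_antisymm (by linarith) (mul_nonneg (hδ1 i).le (hzn i))
    have hz0 : z i = 0 := by
      rcases mul_eq_zero.mp hzz with h | h
      · exact absurd h (ne_of_gt (hδ1 i))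
      · exact h
    have hb : (1 - x1 i - x2 i - z i) * ∑ j, B2 i j * (x2 j + z j) = 0 := by linarith
    have hSzero : ∑ j, B2 i j * (x2 j + z j) = 0 := by
      rcases mul_eq_zero.mp hb with hr0 | hs
      · exfalso
        have hx11 : x1 i = 1 := by linarith
        have e1 := heq1 i
        have u1 : -δ1 i * x1 i = -δ1 i := by rw [hx11]; ring
        have u2 : δ2 i * z i = 0 := by rw [hz0]; ring
        have u3 : (1 - x1 i - x2 i - z i) * ∑ j, B1 i j * (x1 j + z j) = 0 := by
          rw [hr0]; ring
        have u4 : 0 ≤ x1 i * ε1 * ∑ j, B2 i j * (x2 j + z j) :=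
          mul_nonneg (mul_nonneg (hx1n i) hε1) (hS2 i)
        have := hδ1 i
        linarith
      · exact hs
    refine ⟨hz0, fun j hj => ?_⟩
    have hterm : B2 i j * (x2 j + z j) = 0 :=
      (Finset.sum_eq_zero_iff_of_nonneg
        (fun k _ => mul_nonneg (hB2 i k) (add_nonneg (hx2n k) (hzn k)))).mp
        hSzero j (Finset.mem_univ j)
    rcases mul_eq_zero.mp hterm with h | h
    · exact absurd h hj
    · have := hx2n j; have := hzn j; linarith
  obtain ⟨i0, hzi0⟩ := hzpos
  have x1pos : ∀ i, 0 < x1 i := by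
    intro i
    rcases (hx1n i).lt_or_eq with h | h
    · exact h
    exfalso
    have hall : ∀ j, Relation.ReflTransGen (fun a b => B1 a b ≠ 0) i j → x1 j = 0 := by
      intro j hp
      induction hp with
      | refl => exact h.symm
      | tail _ hedge ih => exact (K1 _ ih).2 _ hedge
    have := (K1 i0 (hall i0 (hB1irr i i0))).1
    linarith
  have x2pos : ∀ i, 0 < x2 i := by
    intro i
    rcases (hx2n i).lt_or_eq with h | h
    · exact h
    exfalso
    have hall : ∀ j, Relation.ReflTransGen (fun a b => B2 a b ≠ 0) i j → x2 j = 0 := by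
      intro j hp
      induction hp with
      | refl => exact h.symm
      | tail _ hedge ih => exact (K2 _ ih).2 _ hedge
    have := (K2 i0 (hall i0 (hB2irr i i0))).1
    linarith
  have hzeq : ∀ i, (δ1 i + δ2 i) * z i
      = x1 i * ε1 * (∑ j, B2 i j * (x2 j + z j))
        + x2 i * ε2 * (∑ j, B1 i j * (x1 j + z j)) := by
    intro i; have := heqz i; linarith
  have hδs : ∀ i, 0 < δ1 i + δ2 i := fun i => add_pos (hδ1 i) (hδ2 i)
  have hnn1 : ∀ i, 0 ≤ x1 i * ε1 * ∑ j, B2 i j * (x2 j + z j) := fun i =>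
    mul_nonneg (mul_nonneg (hx1n i) hε1) (hS2 i)
  have hnn2 : ∀ i, 0 ≤ x2 i * ε2 * ∑ j, B1 i j * (x1 j + z j) := fun i =>
    mul_nonneg (mul_nonneg (hx2n i) hε2) (hS1 i)
  have hone : 0 < x1 i0 * ε1 * (∑ j, B2 i0 j * (x2 j + z j))
      ∨ 0 < x2 i0 * ε2 * (∑ j, B1 i0 j * (x1 j + z j)) := by
    by_contra hc
    push_neg at hc
    have hpos := mul_pos (hδs i0) hzi0
    have := hzeq i0
    linarith [hc.1, hc.2]
  intro i
  refine ⟨x1pos i, x2pos i, ?_⟩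
  rcases hone with hcase | hcase
  · have hε1pos : 0 < ε1 := by
      rcases hε1.lt_or_eq with h | h
      · exact h
      · exfalso; rw [← h] at hcase; simp at hcase
    by_cases hrow : ∃ j, B2 i j ≠ 0
    · obtain ⟨j, hj⟩ := hrow
      have hS2i : 0 < ∑ k, B2 i k * (x2 k + z k) :=
        Finset.sum_pos' (fun k _ => mul_nonneg (hB2 i k) (add_nonneg (hx2n k) (hzn k)))
          ⟨j, Finset.mem_univ j,
            mul_pos (lt_of_le_of_ne (hB2 i j) (Ne.symm hj))
              (add_pos_of_pos_of_nonneg (x2pos j) (hzn j))⟩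
      have ht1 : 0 < x1 i * ε1 * ∑ k, B2 i k * (x2 k + z k) :=
        mul_pos (mul_pos (x1pos i) hε1pos) hS2i
      have hmul : 0 < (δ1 i + δ2 i) * z i := by
        rw [hzeq i]; linarith [hnn2 i]
      by_contra hzle
      push_neg at hzle
      nlinarith [hδs i]
    · push_neg at hrow
      rcases (hB2irr i i0).cases_head with heqi | ⟨b, hb, _⟩
      · rw [heqi]; exact hzi0
      · exact absurd (hrow b) hb
  · have hε2pos : 0 < ε2 := by
      rcases hε2.lt_or_eq with h | h
      · exact h
      · exfalso; rw [← h] at hcase; simp at hcase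
    by_cases hrow : ∃ j, B1 i j ≠ 0
    · obtain ⟨j, hj⟩ := hrow
      have hS1i : 0 < ∑ k, B1 i k * (x1 k + z k) :=
        Finset.sum_pos' (fun k _ => mul_nonneg (hB1 i k) (add_nonneg (hx1n k) (hzn k)))
          ⟨j, Finset.mem_univ j,
            mul_pos (lt_of_le_of_ne (hB1 i j) (Ne.symm hj))
              (add_pos_of_pos_of_nonneg (x1pos j) (hzn j))⟩
      have ht2 : 0 < x2 i * ε2 * ∑ k, B1 i k * (x1 k + z k) :=
        mul_pos (mul_pos (x2pos i) hε2pos) hS1i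
      have hmul : 0 < (δ1 i + δ2 i) * z i := by
        rw [hzeq i]; linarith [hnn1 i]
      by_contra hzle
      push_neg at hzle
      nlinarith [hδs i]
    · push_neg at hrow
      rcases (hB1irr i i0).cases_head with heqi | ⟨b, hb, _⟩
      · rw [heqi]; exact hzi0
      · exact absurd (hrow b) hb
end

section
/- Let D¹, D² be positive diagonal n×n matrices, B¹, B² irreducible nonnegative matrices, ε ≥ 0, and x̂¹ with 0 ≪ x̂¹ ≪ 1 the single-virus endemic equilibrium of virus 1 (so (-D¹ + (I-X̂¹)B¹)x̂¹ = 0). If s(-D¹ - D² + εX̂¹B²) > 0, then the block 2×2 Metzler matrix J̃ = [[-D² + (I-X̂¹)B² - εB̂¹, (I-X̂¹)B² + D¹],[εB̂¹ + εX̂¹B², -D¹ - D² + εX̂¹B²]], where B̂¹ = diag(B¹x̂¹), satisfies s(J̃) > 0 (i.e., J̃ is not Hurwitz). -/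
open Matrix Polynomial

variable {m : Type*} [Fintype m] [DecidableEq m]

/-!
The two block columns of `J̃` have the same sum, so conjugating by the shear `[[I, 0], [I, I]]`
makes `J̃` block upper triangular and `χ(J̃) = χ(J₁₁ - J₁₂) · χ(N)` with `N = J₁₂ + J₂₂`.
`N` is an irreducible Metzler matrix dominating `J₂₂` entrywise. After shifting both by a multiple
of the identity they are nonnegative, the moduli of an eigenvector of `J₂₂` form a subinvariant
vector of the shifted `N`, and the Collatz–Wielandt maximum then gives `N` a real eigenvalue at
least the real part of that eigenvalue of `J₂₂`. So an eigenvalue of `J₂₂` in the open right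
half-plane produces a positive real eigenvalue of `J̃`.
-/

open Filter Topology

lemma IsIrreducibleMat.of_offDiag_ne_zero {ι : Type*} {A A' : Matrix ι ι ℝ}
    (hA : IsIrreducibleMat A) (h : ∀ i j, i ≠ j → A i j ≠ 0 → A' i j ≠ 0) :
    IsIrreducibleMat A' := by
  intro i j
  induction hA i j with
  | refl => exact .refl
  | @tail b c _ hbc ih =>
    rcases eq_or_ne b c with rfl | hne
    · exact ih
    · exact ih.tail (h b c hne hbc)

section Spectrum

variable {ι : Type*} [Fintype ι] [DecidableEq ι]

lemma lt_specAbscissa_iff {M : Matrix ι ι ℝ} {a : ℝ} (ha : 0 ≤ a) :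
    a < specAbscissa M ↔ ∃ μ ∈ M.charpoly.aroots ℂ, a < μ.re := by
  set S := Complex.re '' {μ | μ ∈ M.charpoly.aroots ℂ}
  have hS : specAbscissa M = sSup S := by
    rw [specAbscissa]; congr 1; ext; simp [S, eq_comm]
  rw [hS]
  rcases S.eq_empty_or_nonempty with h | h
  · rw [h, Real.sSup_empty]
    exact iff_of_false ha.not_gt fun ⟨μ, hμ, _⟩ => h.subset ⟨μ, hμ, rfl⟩
  · rw [lt_csSup_iff ((Multiset.finite_toSet _).image _).bddAbove h]
    simp

lemma mem_aroots_charpoly_iff {M : Matrix ι ι ℝ} {μ : ℂ} :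
    μ ∈ M.charpoly.aroots ℂ ↔ ∃ v ≠ 0, M.map (algebraMap ℝ ℂ) *ᵥ v = μ • v := by
  rw [mem_aroots, and_iff_right M.charpoly_monic.ne_zero, ← eval_map_algebraMap, ← charpoly_map,
    ← IsRoot.def, ← charpoly_toLin', ← Module.End.hasEigenvalue_iff_isRoot_charpoly]
  constructor
  · intro h
    obtain ⟨v, hv⟩ := h.exists_hasEigenvector
    exact ⟨v, hv.2, by simpa using Module.End.mem_eigenspace_iff.1 hv.1⟩
  · rintro ⟨v, hv0, hv⟩
    exact Module.End.hasEigenvalue_of_hasEigenvector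
      ⟨Module.End.mem_eigenspace_iff.2 (by simpa using hv), hv0⟩

lemma ofReal_mem_aroots_charpoly {M : Matrix ι ι ℝ} {t : ℝ} {w : ι → ℝ} (hw0 : w ≠ 0)
    (hw : M *ᵥ w = t • w) : (t : ℂ) ∈ M.charpoly.aroots ℂ := by
  refine mem_aroots_charpoly_iff.2 ⟨algebraMap ℝ ℂ ∘ w, ?_, funext fun i => ?_⟩
  · exact fun h => hw0 (funext fun i => by simpa using congr_fun h i)
  · rw [← RingHom.map_mulVec, hw]
    simp

lemma charpoly_fromBlocks_of_add_eq {R : Type*} [CommRing R] {A B C D : Matrix ι ι R}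
    (h : A + C = B + D) :
    (fromBlocks A B C D).charpoly = (A - B).charpoly * (B + D).charpoly := by
  have hinv : fromBlocks 1 0 (-1) 1 * fromBlocks 1 0 1 1 = (1 : Matrix (ι ⊕ ι) (ι ⊕ ι) R) := by
    simp [fromBlocks_multiply]
  have hconj : fromBlocks 1 0 1 1 * fromBlocks A B C D * fromBlocks 1 0 (-1) 1 =
      fromBlocks (A - B) B 0 (B + D) := by
    simp only [fromBlocks_multiply, Matrix.one_mul, Matrix.zero_mul, Matrix.mul_one,
      Matrix.mul_zero, Matrix.mul_neg, add_zero, zero_add, ← sub_eq_add_neg, h, sub_self]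
  rw [← charpoly_fromBlocks_zero₂₁, ← hconj, charpoly_mul_comm, ← mul_assoc, hinv, one_mul]

end Spectrum

section CollatzWielandt

variable {ι : Type*} [Fintype ι]

lemma inv_sum_smul_mem_stdSimplex {w : ι → ℝ} (hw : 0 < w) :
    (∑ i, w i)⁻¹ • w ∈ stdSimplex ℝ ι := by
  obtain ⟨hw0, j, hj⟩ := Pi.lt_def.1 hw
  have hs : 0 < ∑ i, w i :=
    Finset.sum_pos' (fun i _ => hw0 i) ⟨j, Finset.mem_univ j, hj⟩
  refine ⟨fun i => mul_nonneg (inv_nonneg.2 hs.le) (hw0 i), ?_⟩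
  simp [← Finset.mul_sum, hs.ne']

lemma pos_of_mem_stdSimplex {w : ι → ℝ} (hw : w ∈ stdSimplex ℝ ι) : 0 < w :=
  lt_of_le_of_ne hw.1 fun h => by simpa [← h] using hw.2

lemma exists_pos_smul_le {a : ι → ℝ} (ha : ∀ i, 0 < a i) (z : ι → ℝ) :
    ∃ η : ℝ, 0 < η ∧ η • z ≤ a := by
  have hsmall : ∀ᶠ η in 𝓝[>] (0 : ℝ), ∀ i, η * z i < a i := by
    refine eventually_all.2 fun i => ?_
    have : Tendsto (fun η : ℝ => η * z i) (𝓝[>] 0) (𝓝 0) :=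
      ((continuous_mul_const (z i)).tendsto' 0 0 (zero_mul _)).mono_left nhdsWithin_le_nhds
    exact this.eventually_lt_const (ha i)
  obtain ⟨η, hη, hpos⟩ := (hsmall.and self_mem_nhdsWithin).exists
  exact ⟨η, hpos, fun i => (hη i).le⟩

lemma mulVec_apply_pos {E : Matrix ι ι ℝ} (hE : ∀ i j, 0 < E i j) {w : ι → ℝ} (hw : 0 < w)
    (i : ι) : 0 < (E *ᵥ w) i := by
  obtain ⟨hw0, j, hj⟩ := Pi.lt_def.1 hw
  exact Finset.sum_pos' (fun k _ => mul_nonneg (hE i k).le (hw0 k))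
    ⟨j, Finset.mem_univ j, mul_pos (hE i j) hj⟩

lemma re_smul_norm_le_mulVec_norm {P : Matrix ι ι ℝ} (hP : ∀ i j, 0 ≤ P i j) {μ : ℂ}
    {v : ι → ℂ} (hv : P.map (algebraMap ℝ ℂ) *ᵥ v = μ • v) :
    μ.re • (fun i => ‖v i‖) ≤ P *ᵥ fun i => ‖v i‖ := fun i =>
  calc μ.re * ‖v i‖ ≤ ‖μ‖ * ‖v i‖ :=
        mul_le_mul_of_nonneg_right (Complex.re_le_norm μ) (norm_nonneg _)
    _ = ‖(P.map (algebraMap ℝ ℂ) *ᵥ v) i‖ := by rw [hv, Pi.smul_apply, norm_smul]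
    _ ≤ ∑ j, ‖P.map (algebraMap ℝ ℂ) i j * v j‖ := norm_sum_le _ _
    _ = (P *ᵥ fun i => ‖v i‖) i := by simp [mulVec, dotProduct, abs_of_nonneg (hP i _)]

variable {Q : Matrix ι ι ℝ}

lemma le_sum_sum_of_smul_le_mulVec (hQ : ∀ i j, 0 ≤ Q i j) {t : ℝ} {w : ι → ℝ}
    (hw : w ∈ stdSimplex ℝ ι) (htw : t • w ≤ Q *ᵥ w) : t ≤ ∑ i, ∑ j, Q i j :=
  calc t = ∑ i, t * w i := by rw [← Finset.mul_sum, hw.2, mul_one]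
    _ ≤ ∑ i, (Q *ᵥ w) i := Finset.sum_le_sum fun i _ => htw i
    _ ≤ ∑ i, ∑ j, Q i j := Finset.sum_le_sum fun i _ => Finset.sum_le_sum fun j _ =>
        mul_le_of_le_one_right (hQ i j) (mem_Icc_of_mem_stdSimplex hw j).2

lemma smul_le_mulVec_smul {t c : ℝ} {w : ι → ℝ} (hc : 0 ≤ c) (htw : t • w ≤ Q *ᵥ w) :
    t • c • w ≤ Q *ᵥ (c • w) := by
  rw [mulVec_smul, smul_comm]
  exact smul_le_smul_of_nonneg_left htw hc

lemma exists_max_smul_le_mulVec (hQ : ∀ i j, 0 ≤ Q i j) {r : ℝ} {u : ι → ℝ} (hu : 0 < u)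
    (hru : r • u ≤ Q *ᵥ u) :
    ∃ t w, r ≤ t ∧ 0 < w ∧ t • w ≤ Q *ᵥ w ∧
      ∀ t' w', 0 < w' → t' • w' ≤ Q *ᵥ w' → t' ≤ t := by
  set K := (Set.Icc r (∑ i, ∑ j, Q i j) ×ˢ stdSimplex ℝ ι) ∩ {p | p.1 • p.2 ≤ Q *ᵥ p.2}
  have hK : IsCompact K := (isCompact_Icc.prod (isCompact_stdSimplex ℝ ι)).inter_right
    (isClosed_le (continuous_fst.smul continuous_snd)
      (continuous_const.matrix_mulVec continuous_snd))
  have hmem {t : ℝ} {w : ι → ℝ} (hrt : r ≤ t) (hw : 0 < w) (htw : t • w ≤ Q *ᵥ w) :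
      (t, (∑ i, w i)⁻¹ • w) ∈ K := by
    have hw' := inv_sum_smul_mem_stdSimplex hw
    have htw' : t • (∑ i, w i)⁻¹ • w ≤ Q *ᵥ ((∑ i, w i)⁻¹ • w) :=
      smul_le_mulVec_smul (inv_nonneg.2 (Finset.sum_nonneg fun i _ => hw.le i)) htw
    exact ⟨⟨⟨hrt, le_sum_sum_of_smul_le_mulVec hQ hw' htw'⟩, hw'⟩, htw'⟩
  obtain ⟨⟨t, w⟩, ⟨⟨ht, hw⟩, htw⟩, hmax⟩ :=
    hK.exists_isMaxOn ⟨_, hmem le_rfl hu hru⟩ continuous_fst.continuousOn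
  refine ⟨t, w, ht.1, pos_of_mem_stdSimplex hw, htw, fun t' w' hw' ht'w' => ?_⟩
  rcases le_or_gt t' r with h | h
  · exact h.trans ht.1
  · exact hmax (hmem h.le hw' ht'w')

end CollatzWielandt

section PerronFrobenius

variable {ι : Type*} [Fintype ι] [DecidableEq ι]

lemma IsMetzler.exists_add_smul_one_nonneg {M : Matrix ι ι ℝ} (hM : IsMetzler M) :
    ∃ c : ℝ, ∀ i j, 0 ≤ (M + c • 1) i j := by
  refine ⟨∑ k, |M k k|, fun i j => ?_⟩
  rcases eq_or_ne i j with rfl | hij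
  · have := Finset.single_le_sum (fun k _ => abs_nonneg (M k k)) (Finset.mem_univ i)
    simp only [Matrix.add_apply, Matrix.smul_apply, one_apply_eq, smul_eq_mul, mul_one]
    linarith [neg_abs_le (M i i)]
  · simpa [one_apply_ne hij] using hM i j hij

variable {Q : Matrix ι ι ℝ}

lemma one_add_pow_succ_apply (k : ℕ) (i j : ι) :
    ((1 + Q) ^ (k + 1)) i j = ((1 + Q) ^ k) i j + ∑ a, ((1 + Q) ^ k) i a * Q a j := by
  rw [pow_succ, mul_add, mul_one, Matrix.add_apply, mul_apply]

lemma one_add_pow_apply_nonneg (hQ : ∀ i j, 0 ≤ Q i j) (k : ℕ) (i j : ι) :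
    0 ≤ ((1 + Q) ^ k) i j := by
  induction k generalizing j with
  | zero => by_cases hij : i = j <;> simp [one_apply, hij]
  | succ k ih =>
    rw [one_add_pow_succ_apply]
    exact add_nonneg (ih j) (Finset.sum_nonneg fun a _ => mul_nonneg (ih a) (hQ a j))

lemma exists_one_add_pow_pos (hQ : ∀ i j, 0 ≤ Q i j) (hirr : IsIrreducibleMat Q) :
    ∃ k : ℕ, ∀ i j, 0 < ((1 + Q) ^ k) i j := by
  have hterm (k : ℕ) (i a j : ι) : 0 ≤ ((1 + Q) ^ k) i a * Q a j :=
    mul_nonneg (one_add_pow_apply_nonneg hQ k i a) (hQ a j)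
  have hmono (i j : ι) : Monotone fun k : ℕ => ((1 + Q) ^ k) i j :=
    monotone_nat_of_le_succ fun k => by
      rw [one_add_pow_succ_apply]
      exact le_add_of_nonneg_right (Finset.sum_nonneg fun a _ => hterm k i a j)
  have hpath (i j : ι) : ∃ k : ℕ, 0 < ((1 + Q) ^ k) i j := by
    induction hirr i j with
    | refl => exact ⟨0, by simp⟩
    | @tail b c _ hbc ih =>
      obtain ⟨k, hk⟩ := ih
      refine ⟨k + 1, ?_⟩
      rw [one_add_pow_succ_apply]
      refine add_pos_of_nonneg_of_pos (one_add_pow_apply_nonneg hQ k i c) ?_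
      exact (mul_pos hk ((hQ b c).lt_of_ne' hbc)).trans_le
        (Finset.single_le_sum (fun a _ => hterm k i a c) (Finset.mem_univ b))
  choose k hk using hpath
  exact ⟨Finset.univ.sup fun p : ι × ι => k p.1 p.2, fun i j =>
    (hk i j).trans_le (hmono i j (Finset.le_sup (f := fun p : ι × ι => k p.1 p.2)
      (Finset.mem_univ (i, j))))⟩

lemma mulVec_eq_smul_of_maximal (hQ : ∀ i j, 0 ≤ Q i j) (hirr : IsIrreducibleMat Q) {t : ℝ}
    {w : ι → ℝ} (hw : 0 < w) (htw : t • w ≤ Q *ᵥ w)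
    (hmax : ∀ t' w', 0 < w' → t' • w' ≤ Q *ᵥ w' → t' ≤ t) : Q *ᵥ w = t • w := by
  by_contra hne
  have hy : 0 < Q *ᵥ w - t • w := lt_of_le_of_ne (sub_nonneg.2 htw) (sub_ne_zero.2 hne).symm
  obtain ⟨k, hk⟩ := exists_one_add_pow_pos hQ hirr
  set E := (1 + Q) ^ k
  have hcomm : E * Q = Q * E := (((Commute.one_left Q).add_left (.refl Q)).pow_left k).eq
  -- `E` is entrywise positive and commutes with `Q`, so `Q (E w) - t (E w) = E (Q w - t w)` is
  -- strictly positive and `t` can be increased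
  have hz : 0 < E *ᵥ w := by
    obtain ⟨-, j, hj⟩ := Pi.lt_def.1 hw
    exact Pi.lt_def.2 ⟨fun i => (mulVec_apply_pos hk hw i).le, j, mulVec_apply_pos hk hw j⟩
  obtain ⟨η, hη, hηle⟩ := exists_pos_smul_le (mulVec_apply_pos hk hy) (E *ᵥ w)
  have hbetter : (t + η) • E *ᵥ w ≤ Q *ᵥ (E *ᵥ w) := by
    calc (t + η) • E *ᵥ w = t • E *ᵥ w + η • E *ᵥ w := add_smul _ _ _
      _ ≤ t • E *ᵥ w + E *ᵥ (Q *ᵥ w - t • w) := add_le_add_right hηle _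
      _ = Q *ᵥ (E *ᵥ w) := by
        rw [mulVec_sub, mulVec_smul, mulVec_mulVec, mulVec_mulVec, hcomm]
        abel
  linarith [hmax _ _ hz hbetter]

lemma exists_eigenvector_of_smul_le_mulVec (hQ : ∀ i j, 0 ≤ Q i j) (hirr : IsIrreducibleMat Q)
    {r : ℝ} {u : ι → ℝ} (hu : 0 < u) (hru : r • u ≤ Q *ᵥ u) :
    ∃ t, r ≤ t ∧ ∃ w, w ≠ 0 ∧ Q *ᵥ w = t • w := by
  obtain ⟨t, w, hrt, hw, htw, hmax⟩ := exists_max_smul_le_mulVec hQ hu hru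
  exact ⟨t, hrt, w, hw.ne', mulVec_eq_smul_of_maximal hQ hirr hw htw hmax⟩

theorem exists_real_root_ge_re {M N : Matrix ι ι ℝ} (hM : IsMetzler M)
    (hMN : ∀ i j, M i j ≤ N i j) (hN : IsIrreducibleMat N) {μ : ℂ}
    (hμ : μ ∈ M.charpoly.aroots ℂ) : ∃ t : ℝ, μ.re ≤ t ∧ (t : ℂ) ∈ N.charpoly.aroots ℂ := by
  obtain ⟨v, hv0, hv⟩ := mem_aroots_charpoly_iff.1 hμ
  obtain ⟨c, hc⟩ := hM.exists_add_smul_one_nonneg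
  have hPQ (i j : ι) : (M + c • 1) i j ≤ (N + c • 1) i j := by
    simpa only [Matrix.add_apply] using add_le_add_left (hMN i j) _
  have hPv : (M + c • 1).map (algebraMap ℝ ℂ) *ᵥ v = (μ + c) • v := by
    rw [Matrix.map_add _ (map_add _), Matrix.map_smul' _ _ _ (map_mul _),
      Matrix.map_one _ (map_zero _) (map_one _), add_mulVec, hv, smul_mulVec, one_mulVec, add_smul]
    rfl
  have hu : 0 < fun i => ‖v i‖ := lt_of_le_of_ne (fun i => norm_nonneg _)
    fun h => hv0 (funext fun i => norm_eq_zero.1 (congr_fun h i).symm)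
  have hru : (μ.re + c) • (fun i => ‖v i‖) ≤ (N + c • 1) *ᵥ fun i => ‖v i‖ := by
    have hre := re_smul_norm_le_mulVec_norm hc hPv
    rw [Complex.add_re, Complex.ofReal_re] at hre
    refine hre.trans fun i => ?_
    exact Finset.sum_le_sum fun j _ => mul_le_mul_of_nonneg_right (hPQ i j) (norm_nonneg _)
  have hirr : IsIrreducibleMat (N + c • 1) :=
    hN.of_offDiag_ne_zero fun i j hij h => by simpa [one_apply_ne hij] using h
  obtain ⟨t, ht, w, hw0, hw⟩ :=
    exists_eigenvector_of_smul_le_mulVec (fun i j => (hc i j).trans (hPQ i j)) hirr hu hru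
  refine ⟨t - c, by linarith, ofReal_mem_aroots_charpoly hw0 ?_⟩
  rw [sub_smul, ← hw, add_mulVec, smul_mulVec, one_mulVec, add_sub_cancel_right]

end PerronFrobenius

theorem jtilde_not_hurwitz_of_subblock_unstable_general
    {n : ℕ} (δ1 δ2 : Fin n → ℝ) (B1 B2 : Matrix (Fin n) (Fin n) ℝ) (ε : ℝ)
    (hδ1 : ∀ i, 0 < δ1 i)
    (hB2 : ∀ i j, 0 ≤ B2 i j)
    (hB2irr : IsIrreducibleMat B2)
    (hε : 0 ≤ ε)
    (x1 : Fin n → ℝ) (hx1 : ∀ i, 0 < x1 i ∧ x1 i < 1)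
    (hunst : 0 < specAbscissa
      (-(Matrix.diagonal δ1) - Matrix.diagonal δ2
        + ε • (Matrix.diagonal x1 * B2))) :
    0 < specAbscissa (Matrix.fromBlocks
      (-(Matrix.diagonal δ2) + (1 - Matrix.diagonal x1) * B2
        - ε • Matrix.diagonal (B1.mulVec x1))
      ((1 - Matrix.diagonal x1) * B2 + Matrix.diagonal δ1)
      (ε • Matrix.diagonal (B1.mulVec x1) + ε • (Matrix.diagonal x1 * B2))
      (-(Matrix.diagonal δ1) - Matrix.diagonal δ2
        + ε • (Matrix.diagonal x1 * B2))) := by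
  set M := -(diagonal δ1) - diagonal δ2 + ε • (diagonal x1 * B2)
  set B := (1 - diagonal x1) * B2 + diagonal δ1
  have hMoff {i j : Fin n} (hij : i ≠ j) : M i j = ε * x1 i * B2 i j := by
    simp [M, hij, mul_assoc]
  have hB (i j : Fin n) : B i j = (1 - x1 i) * B2 i j + if i = j then δ1 i else 0 := by
    simp [B, sub_mul, diagonal_apply]
  have hB_nonneg (i j : Fin n) : 0 ≤ B i j := by
    rw [hB]
    refine add_nonneg (mul_nonneg (by linarith [hx1 i]) (hB2 i j)) ?_
    split_ifs <;> simp [(hδ1 i).le]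
  have hM : IsMetzler M := fun i j hij => by
    rw [hMoff hij]; exact mul_nonneg (mul_nonneg hε (hx1 i).1.le) (hB2 i j)
  have hN : IsIrreducibleMat (B + M) := hB2irr.of_offDiag_ne_zero fun i j hij h => by
    rw [Matrix.add_apply, hB, hMoff hij, if_neg hij, add_zero]
    have hB2ij : 0 < B2 i j := (hB2 i j).lt_of_ne' h
    exact (add_pos_of_pos_of_nonneg (mul_pos (by linarith [hx1 i]) hB2ij)
      (mul_nonneg (mul_nonneg hε (hx1 i).1.le) hB2ij.le)).ne'
  obtain ⟨μ, hμ, hre⟩ := (lt_specAbscissa_iff le_rfl).1 hunst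
  obtain ⟨t, hμt, ht⟩ :=
    exists_real_root_ge_re (N := B + M) hM (fun i j => le_add_of_nonneg_left (hB_nonneg i j)) hN hμ
  refine (lt_specAbscissa_iff le_rfl).2 ⟨t, ?_, by simpa using hre.trans_le hμt⟩
  rw [charpoly_fromBlocks_of_add_eq (by simp only [B, M]; abel),
    aroots_mul ((charpoly_monic _).mul (charpoly_monic _)).ne_zero]
  exact Multiset.mem_add.2 (Or.inr ht)

/-- If s(-D¹-D²+εX̂¹B²) > 0 then the Jacobian sub-block J̃ at the boundary equilibrium
(x̂¹,0,0) is not Hurwitz: s(J̃) > 0. -/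
theorem jtilde_not_hurwitz_of_subblock_unstable
    {n : ℕ} (δ1 δ2 : Fin n → ℝ) (B1 B2 : Matrix (Fin n) (Fin n) ℝ) (ε : ℝ)
    (hδ1 : ∀ i, 0 < δ1 i) (hδ2 : ∀ i, 0 < δ2 i)
    (hB1 : ∀ i j, 0 ≤ B1 i j) (hB2 : ∀ i j, 0 ≤ B2 i j)
    (hB1irr : IsIrreducibleMat B1) (hB2irr : IsIrreducibleMat B2)
    (hε : 0 ≤ ε)
    (x1 : Fin n → ℝ) (hx1 : ∀ i, 0 < x1 i ∧ x1 i < 1)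
    (heq : (-(Matrix.diagonal δ1) + (1 - Matrix.diagonal x1) * B1).mulVec x1 = 0)
    (hunst : 0 < specAbscissa
      (-(Matrix.diagonal δ1) - Matrix.diagonal δ2
        + ε • (Matrix.diagonal x1 * B2))) :
    0 < specAbscissa (Matrix.fromBlocks
      (-(Matrix.diagonal δ2) + (1 - Matrix.diagonal x1) * B2
        - ε • Matrix.diagonal (B1.mulVec x1))
      ((1 - Matrix.diagonal x1) * B2 + Matrix.diagonal δ1)
      (ε • Matrix.diagonal (B1.mulVec x1) + ε • (Matrix.diagonal x1 * B2))
      (-(Matrix.diagonal δ1) - Matrix.diagonal δ2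
        + ε • (Matrix.diagonal x1 * B2))) :=
  jtilde_not_hurwitz_of_subblock_unstable_general δ1 δ2 B1 B2 ε hδ1 hB2 hB2irr hε x1 hx1 hunst
end
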